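/- arXiv:2207.13455 — 9 statements merged into one kernel-verified Lean document; each statement's English description precedes it below -/
import Mathlib

section
/- For any ordinal μ, the lexicographic order on the product space [0,1]^μ (indexed by μ, with the product topology) is a linear order in which every non-empty closed subset has both a least and a greatest element. -/
/-- The lexicographic order on `[0,1]^μ`: `f ≼ g` iff `f = g` or `f α < g α` at the
least index `α` where they differ. -/
def ordLexOrder (μ : Ordinal) (f g : μ.ToType → unitInterval) : Prop :=
  f = g ∨ ∃ α : μ.ToType, (∀ β : μ.ToType, β < α → f β = g β) ∧ f α < g α

/-!
The lexicographic order on `∀ i, β i` is linear as soon as the index set is well ordered. For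
a compact `K`, its least element is built by transfinite recursion, coordinate by coordinate: at
index `i` take the least `i`-th coordinate among the points of `K` that agree with the values
already chosen below `i`. The points of `K` agreeing with the choices up to `j` form a nested
family of nonempty compact sets, so by Cantor's intersection theorem the recursion never runs out
of points; the resulting point lies in `K` and is lexicographically below every point of `K`. The
greatest element is the least one for the reversed orders on the factors. Closed subsets of
`[0,1]^μ` are compact.
-/

open Set OrderDual

namespace Pi

theorem toLex_toDual_lt_iff {ι : Type*} [LT ι] {β : ι → Type*} [∀ i, LT (β i)]
    {x y : ∀ i, β i} :
    toLex (fun i => toDual (x i)) < toLex (fun i => toDual (y i)) ↔ toLex y < toLex x :=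
  ⟨fun ⟨i, h, hi⟩ => ⟨i, fun j hj => (h j hj).symm, hi⟩,
    fun ⟨i, h, hi⟩ => ⟨i, fun j hj => congrArg toDual (h j hj).symm, hi⟩⟩

variable {ι : Type*} [LinearOrder ι] [WellFoundedLT ι] {β : ι → Type*}
  [∀ i, ConditionallyCompleteLinearOrder (β i)]

noncomputable def lexInf (K : Set (∀ i, β i)) : ∀ i, β i :=
  WellFoundedLT.fix fun i m => sInf ((· i) '' {f ∈ K | ∀ j (h : j < i), f j = m j h})

def agreeLexInfOn (K : Set (∀ i, β i)) (s : Set ι) : Set (∀ i, β i) :=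
  {f ∈ K | ∀ j ∈ s, f j = lexInf K j}

variable {K : Set (∀ i, β i)}

theorem lexInf_apply (K : Set (∀ i, β i)) (i : ι) :
    lexInf K i = sInf ((· i) '' agreeLexInfOn K (Iio i)) := by
  rw [lexInf, WellFoundedLT.fix_eq]
  rfl

theorem agreeLexInfOn_anti {s t : Set ι} (h : s ⊆ t) : agreeLexInfOn K t ⊆ agreeLexInfOn K s :=
  fun _ hf => ⟨hf.1, fun j hj => hf.2 j (h hj)⟩

theorem agreeLexInfOn_univ : agreeLexInfOn K univ = K ∩ {lexInf K} := by
  ext f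
  simp [agreeLexInfOn, funext_iff]

variable [∀ i, TopologicalSpace (β i)] [∀ i, OrderClosedTopology (β i)]

theorem isCompact_agreeLexInfOn (hK : IsCompact K) (s : Set ι) :
    IsCompact (agreeLexInfOn K s) := by
  have : agreeLexInfOn K s = K ∩ ⋂ j ∈ s, {f | f j = lexInf K j} := by
    ext f; simp [agreeLexInfOn]
  rw [this]
  exact hK.inter_right <|
    isClosed_biInter fun j _ => isClosed_eq (continuous_apply j) continuous_const

theorem isLeast_lexInf_apply (hK : IsCompact K) {i : ι}
    (hne : (agreeLexInfOn K (Iio i)).Nonempty) :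
    IsLeast ((· i) '' agreeLexInfOn K (Iio i)) (lexInf K i) :=
  lexInf_apply K i ▸ ((isCompact_agreeLexInfOn hK _).image (continuous_apply i)).isLeast_sInf
    (hne.image _)

theorem agreeLexInfOn_Iic_nonempty (hK : IsCompact K) {i : ι}
    (hne : (agreeLexInfOn K (Iio i)).Nonempty) : (agreeLexInfOn K (Iic i)).Nonempty := by
  obtain ⟨f, ⟨hfK, hf⟩, hfi⟩ := (isLeast_lexInf_apply hK hne).1
  refine ⟨f, hfK, fun j hj => ?_⟩
  rcases hj.lt_or_eq with hj | rfl
  exacts [hf j hj, hfi]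

theorem agreeLexInfOn_nonempty_of_forall_Iic (hK : IsCompact K) (hKne : K.Nonempty) {s : Set ι}
    (h : ∀ j ∈ s, (agreeLexInfOn K (Iic j)).Nonempty) : (agreeLexInfOn K s).Nonempty := by
  rcases s.eq_empty_or_nonempty with rfl | ⟨j₀, hj₀⟩
  · simpa [agreeLexInfOn] using hKne
  have : Nonempty s := ⟨⟨j₀, hj₀⟩⟩
  obtain ⟨f, hf⟩ := IsCompact.nonempty_iInter_of_directed_nonempty_isCompact_isClosed
    (fun j : s => agreeLexInfOn K (Iic j.1))
    (Antitone.directed_ge fun _ _ hjk => agreeLexInfOn_anti (Iic_subset_Iic.2 hjk))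
    (fun j => h j j.2) (fun j => isCompact_agreeLexInfOn hK _)
    (fun j => (isCompact_agreeLexInfOn hK _).isClosed)
  rw [mem_iInter] at hf
  exact ⟨f, (hf ⟨j₀, hj₀⟩).1, fun j hj => (hf ⟨j, hj⟩).2 j le_rfl⟩

theorem lexInf_mem (hK : IsCompact K) (hKne : K.Nonempty) : lexInf K ∈ K := by
  have hIic : ∀ i, (agreeLexInfOn K (Iic i)).Nonempty := fun i => by
    induction i using WellFoundedLT.induction with
    | ind i ih =>
      exact agreeLexInfOn_Iic_nonempty hK
        (agreeLexInfOn_nonempty_of_forall_Iic hK hKne ih)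
  obtain ⟨f, hfK, rfl⟩ := agreeLexInfOn_univ (K := K) ▸
    agreeLexInfOn_nonempty_of_forall_Iic hK hKne fun j _ => hIic j
  exact hfK

theorem toLex_lexInf_le (hK : IsCompact K) {f : ∀ i, β i} (hf : f ∈ K) :
    toLex (lexInf K) ≤ toLex f := by
  refine not_lt.1 fun ⟨i, hagree, hlt⟩ => ?_
  have hfi : f ∈ agreeLexInfOn K (Iio i) := ⟨hf, hagree⟩
  exact (isLeast_lexInf_apply hK ⟨f, hfi⟩).2 ⟨f, hfi, rfl⟩ |>.not_gt hlt

theorem _root_.IsCompact.exists_forall_toLex_le (hK : IsCompact K) (hne : K.Nonempty) :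
    ∃ a ∈ K, ∀ x ∈ K, toLex a ≤ toLex x :=
  ⟨lexInf K, lexInf_mem hK hne, fun _ => toLex_lexInf_le hK⟩

theorem _root_.IsCompact.exists_forall_le_toLex (hK : IsCompact K) (hne : K.Nonempty) :
    ∃ b ∈ K, ∀ x ∈ K, toLex x ≤ toLex b := by
  obtain ⟨b, hb, hleast⟩ := IsCompact.exists_forall_toLex_le (β := fun i => (β i)ᵒᵈ) hK hne
  exact ⟨b, hb, fun x hx => not_lt.1 fun hlt => (hleast x hx).not_gt (toLex_toDual_lt_iff.2 hlt)⟩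

end Pi

theorem ordLexOrder_iff {μ : Ordinal} {f g : μ.ToType → unitInterval} :
    ordLexOrder μ f g ↔ toLex f ≤ toLex g := by
  rw [le_iff_lt_or_eq, or_comm]
  rfl

/-- For any ordinal μ, the lexicographic order on the product space `[0,1]^μ` (with the
product topology) is a linear order in which every non-empty closed subset has both a
least and a greatest element. -/
theorem ordLexOrder_symmetric_topological_well_order (μ : Ordinal) :
    IsLinearOrder (μ.ToType → unitInterval) (ordLexOrder μ) ∧
      ∀ F : Set (μ.ToType → unitInterval), IsClosed F → F.Nonempty →
        (∃ a ∈ F, ∀ x ∈ F, ordLexOrder μ a x) ∧ (∃ b ∈ F, ∀ x ∈ F, ordLexOrder μ x b) := by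
  have hrel : ordLexOrder μ = fun f g => toLex f ≤ toLex g := by
    ext f g
    exact ordLexOrder_iff
  refine ⟨hrel ▸ inferInstanceAs (IsLinearOrder (Lex _) (· ≤ ·)), fun F hF hne => ?_⟩
  simp only [ordLexOrder_iff]
  exact ⟨hF.isCompact.exists_forall_toLex_le hne, hF.isCompact.exists_forall_le_toLex hne⟩
end

section
/- Every compact Hausdorff space is Stäckel-compact. -/
open Set

section StackelAux

variable {X : Type*} [TopologicalSpace X]

/-- A "good" relation: a total preorder (as a set of pairs) with closed equivalence
classes such that every nonempty closed set has a least and a greatest element. -/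
def StackelGood (X : Type*) [TopologicalSpace X] (s : Set (X × X)) : Prop :=
  (∀ x : X, (x, x) ∈ s) ∧
  (∀ ⦃x y z : X⦄, (x, y) ∈ s → (y, z) ∈ s → (x, z) ∈ s) ∧
  (∀ x y : X, (x, y) ∈ s ∨ (y, x) ∈ s) ∧
  (∀ x : X, IsClosed {y | (x, y) ∈ s ∧ (y, x) ∈ s}) ∧
  (∀ F : Set X, IsClosed F → F.Nonempty →
    (∃ a ∈ F, ∀ x ∈ F, (a, x) ∈ s) ∧ (∃ b ∈ F, ∀ x ∈ F, (x, b) ∈ s))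

/-- The set of minimizers of a closed set w.r.t. a good relation is closed (it equals the
intersection of the set with the equivalence class of any one minimizer). -/
theorem stackelGood_minSet_eq {s : Set (X × X)} (hs : StackelGood X s)
    {F : Set X} {a : X} (ha : a ∈ F) (hmin : ∀ x ∈ F, (a, x) ∈ s) :
    {a' | a' ∈ F ∧ ∀ x ∈ F, (a', x) ∈ s} = F ∩ {y | (a, y) ∈ s ∧ (y, a) ∈ s} := by
  obtain ⟨-, htrans, -, -, -⟩ := hs
  ext y
  constructor
  · rintro ⟨hyF, hy⟩
    exact ⟨hyF, hmin y hyF, hy a ha⟩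
  · rintro ⟨hyF, -, hya⟩
    exact ⟨hyF, fun x hx => htrans hya (hmin x hx)⟩

theorem stackelGood_maxSet_eq {s : Set (X × X)} (hs : StackelGood X s)
    {F : Set X} {b : X} (hb : b ∈ F) (hmax : ∀ x ∈ F, (x, b) ∈ s) :
    {b' | b' ∈ F ∧ ∀ x ∈ F, (x, b') ∈ s} = F ∩ {y | (b, y) ∈ s ∧ (y, b) ∈ s} := by
  obtain ⟨-, htrans, -, -, -⟩ := hs
  ext y
  constructor
  · rintro ⟨hyF, hy⟩
    exact ⟨hyF, hy b hb, hmax y hyF⟩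
  · rintro ⟨hyF, hby, -⟩
    exact ⟨hyF, fun x hx => htrans (hmax x hx) hby⟩

end StackelAux

def StackelCompact (X : Type*) [TopologicalSpace X] : Prop :=
  ∃ r : X → X → Prop, IsLinearOrder X r ∧
    ∀ F : Set X, IsClosed F → F.Nonempty →
      (∃ a ∈ F, ∀ x ∈ F, r a x) ∧ (∃ b ∈ F, ∀ x ∈ F, r x b)

/-- Every compact Hausdorff space is Stäckel-compact. -/
theorem stackelCompact_of_compact (X : Type*) [TopologicalSpace X] [T2Space X]
    [CompactSpace X] : StackelCompact X := by
  classical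
  set S : Set (Set (X × X)) := {s | StackelGood X s} with hS
  -- the trivial relation is good
  have huniv : (univ : Set (X × X)) ∈ S := by
    refine ⟨fun x => trivial, fun _ _ _ _ _ => trivial, fun _ _ => Or.inl trivial, ?_, ?_⟩
    · intro x
      have : {y : X | ((x, y) : X × X) ∈ (univ : Set (X × X)) ∧ (y, x) ∈ (univ : Set (X × X))}
          = univ := by ext; simp
      rw [this]; exact isClosed_univ
    · intro F _ ⟨a, ha⟩
      exact ⟨⟨a, ha, fun _ _ => trivial⟩, ⟨a, ha, fun _ _ => trivial⟩⟩
  -- chains have lower bounds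
  have hchain : ∀ c ⊆ S, IsChain (· ⊆ ·) c → c.Nonempty →
      ∃ lb ∈ S, ∀ s ∈ c, lb ⊆ s := by
    intro c hcS hc hcne
    refine ⟨⋂₀ c, ?_, fun s hs => sInter_subset_of_mem hs⟩
    have hrefl : ∀ x : X, (x, x) ∈ ⋂₀ c := fun x t ht => (hcS ht).1 x
    have htrans : ∀ ⦃x y z : X⦄, (x, y) ∈ ⋂₀ c → (y, z) ∈ ⋂₀ c → (x, z) ∈ ⋂₀ c :=
      fun x y z hxy hyz t ht => (hcS ht).2.1 (hxy t ht) (hyz t ht)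
    have htotal : ∀ x y : X, (x, y) ∈ ⋂₀ c ∨ (y, x) ∈ ⋂₀ c := by
      intro x y
      by_contra h
      push_neg at h
      obtain ⟨h1, h2⟩ := h
      rw [mem_sInter] at h1 h2
      push_neg at h1 h2
      obtain ⟨t, ht, hxy⟩ := h1
      obtain ⟨u, hu, hyx⟩ := h2
      rcases hc.total ht hu with h' | h'
      · rcases (hcS ht).2.2.1 x y with h'' | h''
        · exact hxy h''
        · exact hyx (h' h'')
      · rcases (hcS hu).2.2.1 x y with h'' | h''
        · exact hxy (h' h'')
        · exact hyx h''
    refine ⟨hrefl, htrans, htotal, ?_, ?_⟩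
    · intro x
      have : {y : X | (x, y) ∈ ⋂₀ c ∧ (y, x) ∈ ⋂₀ c}
          = ⋂ t : c, {y : X | (x, y) ∈ (t : Set (X × X)) ∧ (y, x) ∈ (t : Set (X × X))} := by
        ext y
        simp only [mem_setOf_eq, mem_iInter, mem_sInter, Subtype.forall]
        constructor
        · rintro ⟨h1, h2⟩ t ht; exact ⟨h1 t ht, h2 t ht⟩
        · intro h; exact ⟨fun t ht => (h t ht).1, fun t ht => (h t ht).2⟩
      rw [this]
      exact isClosed_iInter fun t => (hcS t.2).2.2.2.1 x
    · intro F hF hFne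
      haveI : Nonempty c := hcne.to_subtype
      constructor
      · -- minimum
        set A : c → Set X := fun t => {a | a ∈ F ∧ ∀ x ∈ F, (a, x) ∈ (t : Set (X × X))} with hA
        have hAne : ∀ t, (A t).Nonempty := by
          intro t
          obtain ⟨a, ha, hamin⟩ := ((hcS t.2).2.2.2.2 F hF hFne).1
          exact ⟨a, ha, hamin⟩
        have hAcl : ∀ t, IsClosed (A t) := by
          intro t
          obtain ⟨a, ha, hamin⟩ := ((hcS t.2).2.2.2.2 F hF hFne).1
          have heq : A t = F ∩ {y | (a, y) ∈ (t : Set (X × X)) ∧ (y, a) ∈ (t : Set (X × X))} :=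
            stackelGood_minSet_eq (hcS t.2) ha hamin
          rw [heq]
          exact hF.inter ((hcS t.2).2.2.2.1 a)
        have hAmono : ∀ t u : c, (t : Set (X × X)) ⊆ u → A t ⊆ A u := by
          rintro t u htu a ⟨ha, hamin⟩
          exact ⟨ha, fun x hx => htu (hamin x hx)⟩
        have hdir : Directed (· ⊇ ·) A := by
          intro t u
          rcases hc.total t.2 u.2 with h | h
          · exact ⟨t, subset_rfl, hAmono t u h⟩
          · exact ⟨u, hAmono u t h, subset_rfl⟩
        have := IsCompact.nonempty_iInter_of_directed_nonempty_isCompact_isClosed A hdir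
          hAne (fun t => (hAcl t).isCompact) hAcl
        obtain ⟨a, ha⟩ := this
        simp only [mem_iInter] at ha
        obtain ⟨t₀⟩ := (inferInstance : Nonempty c)
        refine ⟨a, (ha t₀).1, fun x hx t ht => (ha ⟨t, ht⟩).2 x hx⟩
      · -- maximum
        set B : c → Set X := fun t => {b | b ∈ F ∧ ∀ x ∈ F, (x, b) ∈ (t : Set (X × X))} with hB
        have hBne : ∀ t, (B t).Nonempty := by
          intro t
          obtain ⟨b, hb, hbmax⟩ := ((hcS t.2).2.2.2.2 F hF hFne).2
          exact ⟨b, hb, hbmax⟩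
        have hBcl : ∀ t, IsClosed (B t) := by
          intro t
          obtain ⟨b, hb, hbmax⟩ := ((hcS t.2).2.2.2.2 F hF hFne).2
          have heq : B t = F ∩ {y | (b, y) ∈ (t : Set (X × X)) ∧ (y, b) ∈ (t : Set (X × X))} :=
            stackelGood_maxSet_eq (hcS t.2) hb hbmax
          rw [heq]
          exact hF.inter ((hcS t.2).2.2.2.1 b)
        have hBmono : ∀ t u : c, (t : Set (X × X)) ⊆ u → B t ⊆ B u := by
          rintro t u htu b ⟨hb, hbmax⟩
          exact ⟨hb, fun x hx => htu (hbmax x hx)⟩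
        have hdir : Directed (· ⊇ ·) B := by
          intro t u
          rcases hc.total t.2 u.2 with h | h
          · exact ⟨t, subset_rfl, hBmono t u h⟩
          · exact ⟨u, hBmono u t h, subset_rfl⟩
        have := IsCompact.nonempty_iInter_of_directed_nonempty_isCompact_isClosed B hdir
          hBne (fun t => (hBcl t).isCompact) hBcl
        obtain ⟨b, hb⟩ := this
        simp only [mem_iInter] at hb
        obtain ⟨t₀⟩ := (inferInstance : Nonempty c)
        refine ⟨b, (hb t₀).1, fun x hx t ht => (hb ⟨t, ht⟩).2 x hx⟩
  obtain ⟨m, -, hmMin⟩ := zorn_superset_nonempty S hchain univ huniv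
  obtain ⟨hrefl, htrans, htotal, hclass, hstar⟩ := hmMin.1
  -- minimality implies antisymmetry
  have hanti : ∀ x y : X, (x, y) ∈ m → (y, x) ∈ m → x = y := by
    intro x y hxy hyx
    by_contra hne
    obtain ⟨f, hf0, hf1, -⟩ := exists_continuous_zero_one_of_isClosed
      (isClosed_singleton (x := x)) (isClosed_singleton (x := y))
      (by simpa [disjoint_singleton] using hne)
    set m' : Set (X × X) := {p | p ∈ m ∧ ((p.2, p.1) ∈ m → f p.1 ≤ f p.2)} with hm'
    have hsub : m' ⊆ m := fun p hp => hp.1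
    have hm'S : m' ∈ S := by
      refine ⟨fun z => ⟨hrefl z, fun _ => le_rfl⟩, ?_, ?_, ?_, ?_⟩
      · rintro a b cc ⟨hab, hab'⟩ ⟨hbc, hbc'⟩
        refine ⟨htrans hab hbc, fun hca => ?_⟩
        have hba : (b, a) ∈ m := htrans hbc hca
        have hcb : (cc, b) ∈ m := htrans hca hab
        exact le_trans (hab' hba) (hbc' hcb)
      · intro a b
        rcases htotal a b with h | h
        · by_cases h' : (b, a) ∈ m
          · rcases le_total (f a) (f b) with hle | hle
            · exact Or.inl ⟨h, fun _ => hle⟩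
            · exact Or.inr ⟨h', fun _ => hle⟩
          · exact Or.inl ⟨h, fun hba => absurd hba h'⟩
        · by_cases h' : (a, b) ∈ m
          · rcases le_total (f a) (f b) with hle | hle
            · exact Or.inl ⟨h', fun _ => hle⟩
            · exact Or.inr ⟨h, fun _ => hle⟩
          · exact Or.inr ⟨h, fun hab => absurd hab h'⟩
      · intro a
        have : {y : X | (a, y) ∈ m' ∧ (y, a) ∈ m'}
            = {y : X | (a, y) ∈ m ∧ (y, a) ∈ m} ∩ f ⁻¹' {f a} := by
          ext z
          simp only [hm', mem_setOf_eq, mem_inter_iff, mem_preimage, mem_singleton_iff]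
          constructor
          · rintro ⟨⟨haz, haz'⟩, ⟨hza, hza'⟩⟩
            exact ⟨⟨haz, hza⟩, le_antisymm (hza' haz) (haz' hza)⟩
          · rintro ⟨⟨haz, hza⟩, hfz⟩
            exact ⟨⟨haz, fun _ => hfz.ge⟩, ⟨hza, fun _ => hfz.le⟩⟩
        rw [this]
        exact (hclass a).inter (isClosed_singleton.preimage f.continuous)
      · intro F hF hFne
        constructor
        · obtain ⟨a, ha, hamin⟩ := (hstar F hF hFne).1
          set A : Set X := {a' | a' ∈ F ∧ ∀ x ∈ F, (a', x) ∈ m} with hA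
          have hAcl : IsClosed A := by
            have := stackelGood_minSet_eq ⟨hrefl, htrans, htotal, hclass, hstar⟩ ha hamin
            simp only [hA]
            rw [this]
            exact hF.inter (hclass a)
          have hAne : A.Nonempty := ⟨a, ha, hamin⟩
          obtain ⟨a₀, ha₀A, ha₀min⟩ := hAcl.isCompact.exists_isMinOn hAne
            (f.continuous.continuousOn)
          refine ⟨a₀, ha₀A.1, fun x hx => ⟨ha₀A.2 x hx, fun hxa => ?_⟩⟩
          have hxA : x ∈ A := ⟨hx, fun z hz => htrans hxa (ha₀A.2 z hz)⟩
          exact ha₀min hxA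
        · obtain ⟨b, hb, hbmax⟩ := (hstar F hF hFne).2
          set B : Set X := {b' | b' ∈ F ∧ ∀ x ∈ F, (x, b') ∈ m} with hB
          have hBcl : IsClosed B := by
            have := stackelGood_maxSet_eq ⟨hrefl, htrans, htotal, hclass, hstar⟩ hb hbmax
            simp only [hB]
            rw [this]
            exact hF.inter (hclass b)
          have hBne : B.Nonempty := ⟨b, hb, hbmax⟩
          obtain ⟨b₀, hb₀B, hb₀max⟩ := hBcl.isCompact.exists_isMaxOn hBne
            (f.continuous.continuousOn)
          refine ⟨b₀, hb₀B.1, fun x hx => ⟨hb₀B.2 x hx, fun hbx => ?_⟩⟩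
          have hxB : x ∈ B := ⟨hx, fun z hz => htrans (hb₀B.2 z hz) hbx⟩
          exact hb₀max hxB
    have heq : m' = m := subset_antisymm hsub (hmMin.2 hm'S hsub)
    have : (y, x) ∈ m' := heq ▸ hyx
    have hcon : f y ≤ f x := this.2 hxy
    rw [hf0 (mem_singleton x), hf1 (mem_singleton y)] at hcon
    norm_num at hcon
  refine ⟨fun x y => (x, y) ∈ m, ?_, ?_⟩
  · haveI h1 : IsRefl X (fun x y => (x, y) ∈ m) := ⟨hrefl⟩
    haveI h2 : IsTrans X (fun x y => (x, y) ∈ m) := ⟨fun a b c hab hbc => htrans hab hbc⟩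
    haveI h3 : IsPreorder X (fun x y => (x, y) ∈ m) := {}
    haveI h4 : IsAntisymm X (fun x y => (x, y) ∈ m) := ⟨hanti⟩
    haveI h5 : IsPartialOrder X (fun x y => (x, y) ∈ m) := {}
    haveI h6 : IsTotal X (fun x y => (x, y) ∈ m) := ⟨htotal⟩
    exact {}
  · intro F hF hFne
    exact hstar F hF hFne
end

section
/- Every Stäckel-compact Hausdorff space is countably compact. -/
def CountablyCompact (X : Type*) [TopologicalSpace X] : Prop :=
  ∀ U : ℕ → Set X, (∀ n, IsOpen (U n)) → (⋃ n, U n) = Set.univ →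
    ∃ t : Finset ℕ, (⋃ n ∈ t, U n) = Set.univ

/-- Every Stäckel-compact Hausdorff space is countably compact. -/
theorem countablyCompact_of_stackelCompact (X : Type*) [TopologicalSpace X] [T2Space X]
    (h : StackelCompact X) : CountablyCompact X := by
  obtain ⟨r, hlin, hmm⟩ := h
  have hrefl : ∀ x, r x x := hlin.refl
  have hantisymm : ∀ {x y}, r x y → r y x → x = y := fun hx hy => hlin.antisymm _ _ hx hy
  intro U hUopen hUcov
  by_contra hno
  push_neg at hno
  set F : ℕ → Set X := fun n => (⋃ m ∈ Finset.range (n + 1), U m)ᶜ with hF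
  have hFclosed : ∀ n, IsClosed (F n) := fun n =>
    (isOpen_biUnion fun m _ => hUopen m).isClosed_compl
  have hFne : ∀ n, (F n).Nonempty := by
    intro n
    rw [Set.nonempty_compl]
    exact hno (Finset.range (n + 1))
  have hFanti : ∀ {m n : ℕ}, m ≤ n → F n ⊆ F m := by
    intro m n hmn
    apply Set.compl_subset_compl.2
    exact Set.biUnion_subset_biUnion_left (Finset.range_subset_range.2 (by omega))
  -- b n : the r-greatest element of F n
  choose b hbmem hbmax using fun n => (hmm (F n) (hFclosed n) (hFne n)).2
  -- c : the r-least element of the closure of the range of b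
  have hBclosed : IsClosed (closure (Set.range b)) := isClosed_closure
  have hBne : (closure (Set.range b)).Nonempty :=
    ⟨b 0, subset_closure ⟨0, rfl⟩⟩
  obtain ⟨c, hcmem, hcmin⟩ := (hmm _ hBclosed hBne).1
  -- key claim : c ∈ F n for every n
  have hkey : ∀ n, c ∈ F n := by
    intro n
    have hsplit : Set.range b = (b '' Set.Iio n) ∪ (b '' Set.Ici n) := by
      rw [← Set.image_union, Set.Iio_union_Ici, Set.image_univ]
    have hclosure : closure (Set.range b) ⊆ (b '' Set.Iio n) ∪ closure (b '' Set.Ici n) := by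
      rw [hsplit]
      have hfin : IsClosed (b '' Set.Iio n) :=
        (Set.Finite.image b (Set.finite_Iio n)).isClosed
      calc closure (b '' Set.Iio n ∪ b '' Set.Ici n)
          ⊆ closure (b '' Set.Iio n) ∪ closure (b '' Set.Ici n) := by
            rw [closure_union]
        _ = (b '' Set.Iio n) ∪ closure (b '' Set.Ici n) := by
            rw [hfin.closure_eq]
    have htail : closure (b '' Set.Ici n) ⊆ F n := by
      apply closure_minimal _ (hFclosed n)
      rintro x ⟨m, hm, rfl⟩
      exact hFanti hm (hbmem m)
    rcases hclosure hcmem with hc | hc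
    · obtain ⟨k, hk, hck⟩ := hc
      have h1 : r c (b n) := hcmin _ (subset_closure ⟨n, rfl⟩)
      have h2 : r (b n) c := by
        rw [← hck]
        exact hbmax k (b n) (hFanti (le_of_lt hk) (hbmem n))
      have : c = b n := hantisymm h1 h2
      rw [this]
      exact hbmem n
    · exact htail hc
  -- contradiction : c is not covered
  have : c ∈ ⋃ n, U n := hUcov ▸ Set.mem_univ c
  obtain ⟨_, ⟨m, rfl⟩, hcm⟩ := this
  exact hkey m (Set.mem_biUnion (Finset.self_mem_range_succ m) hcm)
end

section
/- If A is an infinite subset of a topological space in which every non-empty closed set has a least and greatest element under some fixed linear order, then A has a limit point. -/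
open Filter

/-- If every non-empty closed subset of `X` has a least and a greatest element under a
fixed linear order `r`, then every infinite subset `A` of `X` has a limit point. -/
theorem exists_accPt_of_infinite (X : Type*) [TopologicalSpace X]
    (r : X → X → Prop) (hlin : IsLinearOrder X r)
    (hclosed : ∀ F : Set X, IsClosed F → F.Nonempty →
      (∃ a ∈ F, ∀ x ∈ F, r a x) ∧ (∃ b ∈ F, ∀ x ∈ F, r x b))
    (A : Set X) (hA : A.Infinite) :
    ∃ x : X, AccPt x (𝓟 A) := by
  classical
  by_contra h
  push_neg at h
  -- every subset of A is closed
  have hcl : ∀ B : Set X, B ⊆ A → IsClosed B := by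
    intro B hBA
    rw [isClosed_iff_clusterPt]
    intro a ha
    by_contra hab
    refine h a ?_
    have hacc : AccPt a (𝓟 B) := by
      rw [accPt_principal_iff_clusterPt]
      have : B \ {a} = B := Set.diff_singleton_eq_self hab
      rwa [this]
    exact hacc.mono (principal_mono.2 hBA)
  have hmin : ∀ B : Set X, B ⊆ A → B.Nonempty → ∃ a ∈ B, ∀ x ∈ B, r a x :=
    fun B hB hne => (hclosed B (hcl B hB) hne).1
  have hmax : ∀ B : Set X, B ⊆ A → B.Nonempty → ∃ b ∈ B, ∀ x ∈ B, r x b :=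
    fun B hB hne => (hclosed B (hcl B hB) hne).2
  -- for each finite set s, pick the r-least element of A \ s
  have key : ∀ s : Finset X, ∃ a, a ∈ A ∧ a ∉ s ∧ ∀ x ∈ A, x ∉ s → r a x := by
    intro s
    have hne : (A \ ↑s).Nonempty := (hA.diff s.finite_toSet).nonempty
    obtain ⟨a, ha, hleast⟩ := hmin (A \ ↑s) Set.diff_subset hne
    exact ⟨a, ha.1, by simpa using ha.2, fun x hx hxs => hleast x ⟨hx, by simpa using hxs⟩⟩
  choose g hg1 hg2 hg3 using key
  let F : ℕ → Finset X := fun n => Nat.rec ∅ (fun _ Fk => insert (g Fk) Fk) n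
  let f : ℕ → X := fun n => g (F n)
  have hFsucc : ∀ n, F (n + 1) = insert (f n) (F n) := fun n => rfl
  have hFmono : ∀ m n, m ≤ n → F m ⊆ F n := by
    intro m n hmn
    induction n with
    | zero => simpa [Nat.le_zero.1 hmn]
    | succ k ih =>
      rcases Nat.lt_or_ge m (k + 1) with hk | hk
      · exact (ih (Nat.lt_succ_iff.1 hk)).trans (by rw [hFsucc]; exact Finset.subset_insert _ _)
      · have : m = k + 1 := le_antisymm hmn hk
        simp [this]
  have hmem : ∀ m n, m < n → f m ∈ F n := by
    intro m n hmn
    have : f m ∈ F (m + 1) := by rw [hFsucc]; exact Finset.mem_insert_self _ _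
    exact hFmono (m + 1) n hmn this
  have hnotmem : ∀ n, f n ∉ F n := fun n => hg2 (F n)
  have hne : ∀ m n, m < n → f n ≠ f m := by
    intro m n hmn heq
    exact hnotmem n (heq ▸ hmem m n hmn)
  have hord : ∀ m n, m < n → r (f m) (f n) := by
    intro m n hmn
    refine hg3 (F m) (f n) (hg1 (F n)) (fun hc => hnotmem n (hFmono m n hmn.le hc))
  -- the range of f has a greatest element, contradiction
  have hrange : Set.range f ⊆ A := by rintro x ⟨n, rfl⟩; exact hg1 (F n)
  obtain ⟨b, ⟨n, rfl⟩, hb⟩ := hmax (Set.range f) hrange ⟨f 0, 0, rfl⟩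
  have h1 : r (f n) (f (n + 1)) := hord n (n + 1) (Nat.lt_succ_self n)
  have h2 : r (f (n + 1)) (f n) := hb (f (n + 1)) ⟨n + 1, rfl⟩
  exact hne n (n + 1) (Nat.lt_succ_self n) (hlin.toIsPartialOrder.toAntisymm.antisymm _ _ h2 h1)
end

section
/- A Lindelöf Hausdorff space is Stäckel-compact if and only if it is compact. -/
/-!
Continuous real functions separate the points of a compact Hausdorff space `X`, so `X` maps
continuously and injectively into a product `ι → ℝ`; well-order `ι` and pull back the
lexicographic order. A nonempty compact set `K` in the product has a lexicographically least
point: the closed nonempty lex-initial parts of `K` form a chain, so by Cantor's intersection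
theorem there is a smallest one, and it is constant in each coordinate by well-founded induction,
since cutting it at the minimum of a coordinate leaves a smaller lex-initial part.

Conversely, let `G n` be a decreasing sequence of nonempty closed sets, `b n` the greatest point
of `G n` and `m` the least point of the closure of `{b n}`. If `m` is not in `G n`, it is one of
`b 0, …, b (n - 1)`, say `b k`, and `m ≤ b n ≤ b k = m`. So a Stäckel-compact space is
countably compact, and a countably compact Lindelöf space is compact.
-/

open Set OrderDual

section LexExtremum

variable {ι : Type*} [LinearOrder ι] {β : ι → Type*} [∀ i, LinearOrder (β i)]

def IsLexInitial (K L : Set (Π i, β i)) : Prop :=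
  ∀ x ∈ L, ∀ y ∈ K \ L, toLex x < toLex y

theorem IsLexInitial.subset_or_subset {K L₁ L₂ : Set (Π i, β i)} (h₁ : IsLexInitial K L₁)
    (h₂ : IsLexInitial K L₂) (hL₁K : L₁ ⊆ K) (hL₂K : L₂ ⊆ K) : L₁ ⊆ L₂ ∨ L₂ ⊆ L₁ := by
  by_contra! ⟨h₁₂, h₂₁⟩
  obtain ⟨x, hx₁, hx₂⟩ := not_subset.1 h₁₂
  obtain ⟨y, hy₂, hy₁⟩ := not_subset.1 h₂₁
  exact lt_asymm (h₁ x hx₁ y ⟨hL₂K hy₂, hy₁⟩) (h₂ y hy₂ x ⟨hL₁K hx₁, hx₂⟩)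

theorem isLexInitial_sInter {K : Set (Π i, β i)} {S : Set (Set (Π i, β i))}
    (hS : ∀ L ∈ S, IsLexInitial K L) : IsLexInitial K (⋂₀ S) := by
  intro x hx y ⟨hyK, hy⟩
  obtain ⟨L, hLS, hyL⟩ := not_forall₂.1 (mt mem_sInter.2 hy)
  exact hS L hLS x (hx L hLS) y ⟨hyK, hyL⟩

theorem IsLexInitial.inter_apply_le {K L : Set (Π i, β i)} (hL : IsLexInitial K L) {i : ι}
    (hagree : ∀ j < i, ∀ x ∈ L, ∀ y ∈ L, x j = y j) (c : β i) :
    IsLexInitial K (L ∩ {x | x i ≤ c}) := by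
  intro x ⟨hxL, hxc⟩ y ⟨hyK, hy⟩
  by_cases hyL : y ∈ L
  · exact ⟨i, fun j hj => hagree j hj x hxL y hyL, hxc.trans_lt (not_le.1 fun h => hy ⟨hyL, h⟩)⟩
  · exact hL x hxL y ⟨hyK, hyL⟩

theorem toLex_toDual_lt_toLex_toDual {x y : Π i, β i} :
    toLex (fun i => toDual (x i)) < toLex (fun i => toDual (y i)) ↔ toLex y < toLex x := by
  constructor <;> rintro ⟨i, hagree, hlt⟩ <;> exact ⟨i, fun j hj => (hagree j hj).symm, hlt⟩

variable [WellFoundedLT ι]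

theorem toLex_toDual_le_toLex_toDual {x y : Π i, β i} :
    toLex (fun i => toDual (x i)) ≤ toLex (fun i => toDual (y i)) ↔ toLex y ≤ toLex x :=
  not_lt.symm.trans ((not_congr toLex_toDual_lt_toLex_toDual).trans not_lt)

variable [∀ i, TopologicalSpace (β i)] [∀ i, OrderClosedTopology (β i)]

theorem IsLexInitial.subsingleton_of_minimal {K L : Set (Π i, β i)} (hL : IsLexInitial K L)
    (hLc : IsCompact L)
    (hmin : ∀ L' ⊆ L, IsClosed L' → L'.Nonempty → IsLexInitial K L' → L ⊆ L') :
    L.Subsingleton := by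
  suffices ∀ i, ∀ x ∈ L, ∀ y ∈ L, x i = y i from
    fun x hx y hy => funext fun i => this i x hx y hy
  intro i
  induction i using WellFoundedLT.induction with
  | _ i ih =>
  intro x hx y hy
  obtain ⟨z, hzL, hz⟩ := hLc.exists_isMinOn ⟨x, hx⟩ (continuous_apply i).continuousOn
  have hclosed : IsClosed (L ∩ {x | x i ≤ z i}) :=
    hLc.isClosed.inter (isClosed_le (continuous_apply i) continuous_const)
  have hLz : L ⊆ L ∩ {x | x i ≤ z i} :=
    hmin _ inter_subset_left hclosed ⟨z, hzL, le_rfl⟩ (hL.inter_apply_le ih (z i))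
  have hzi : ∀ w ∈ L, w i = z i := fun w hw => le_antisymm (hLz hw).2 (hz hw)
  rw [hzi x hx, hzi y hy]

theorem IsCompact.exists_forall_toLex_le_s8 {K : Set (Π i, β i)} (hK : IsCompact K)
    (hne : K.Nonempty) : ∃ x ∈ K, ∀ y ∈ K, toLex x ≤ toLex y := by
  set S := {L | L ⊆ K ∧ IsClosed L ∧ L.Nonempty ∧ IsLexInitial K L}
  have hKS : K ∈ S := ⟨subset_rfl, hK.isClosed, hne, fun _ _ _ hy => absurd hy.1 hy.2⟩
  have hdir : DirectedOn (· ⊇ ·) S := by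
    intro L₁ h₁ L₂ h₂
    rcases h₁.2.2.2.subset_or_subset h₂.2.2.2 h₁.1 h₂.1 with h | h
    exacts [⟨L₁, h₁, subset_rfl, h⟩, ⟨L₂, h₂, h, subset_rfl⟩]
  have hne₀ : (⋂₀ S).Nonempty :=
    have : Nonempty S := ⟨⟨K, hKS⟩⟩
    IsCompact.nonempty_sInter_of_directed_nonempty_isCompact_isClosed hdir (fun L hL => hL.2.2.1)
      (fun L hL => hK.of_isClosed_subset hL.2.1 hL.1) (fun L hL => hL.2.1)
  have hinit : IsLexInitial K (⋂₀ S) := isLexInitial_sInter fun L hL => hL.2.2.2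
  obtain ⟨x, hx⟩ := hne₀
  have hsubK : ⋂₀ S ⊆ K := sInter_subset_of_mem hKS
  have hsub : (⋂₀ S).Subsingleton :=
    hinit.subsingleton_of_minimal
      (hK.of_isClosed_subset (isClosed_sInter fun L hL => hL.2.1) hsubK)
      fun L' hL' hc hne' hi => sInter_subset_of_mem ⟨hL'.trans hsubK, hc, hne', hi⟩
  refine ⟨x, hsubK hx, fun y hy => ?_⟩
  by_cases hy₀ : y ∈ ⋂₀ S
  · exact (congrArg toLex (hsub hx hy₀)).le
  · exact (hinit x hx y ⟨hy, hy₀⟩).le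

theorem IsCompact.exists_forall_le_toLex_s8 {K : Set (Π i, β i)} (hK : IsCompact K)
    (hne : K.Nonempty) : ∃ x ∈ K, ∀ y ∈ K, toLex y ≤ toLex x := by
  obtain ⟨x, hxK, hx⟩ := IsCompact.exists_forall_toLex_le_s8 (β := fun i => (β i)ᵒᵈ) hK hne
  exact ⟨x, hxK, fun y hy => toLex_toDual_le_toLex_toDual.1 (hx y hy)⟩

end LexExtremum

section

variable {X : Type*} [TopologicalSpace X]

theorem stackelCompact_of_continuous_injective [CompactSpace X] {ι : Type*} {β : ι → Type*}
    [∀ i, LinearOrder (β i)] [∀ i, TopologicalSpace (β i)] [∀ i, OrderClosedTopology (β i)]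
    {φ : X → Π i, β i} (hφ : Continuous φ) (hinj : φ.Injective) : StackelCompact X := by
  obtain ⟨_, _⟩ := exists_wellFoundedLT ι
  let : LinearOrder X := LinearOrder.lift' (toLex ∘ φ) (toLex.injective.comp hinj)
  refine ⟨(· ≤ ·), inferInstance, fun F hF hne => ⟨?_, ?_⟩⟩
  · obtain ⟨_, ⟨a, ha, rfl⟩, hmin⟩ := (hF.isCompact.image hφ).exists_forall_toLex_le_s8 (hne.image φ)
    exact ⟨a, ha, fun x hx => hmin (φ x) (mem_image_of_mem φ hx)⟩
  · obtain ⟨_, ⟨b, hb, rfl⟩, hmax⟩ := (hF.isCompact.image hφ).exists_forall_le_toLex_s8 (hne.image φ)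
    exact ⟨b, hb, fun x hx => hmax (φ x) (mem_image_of_mem φ hx)⟩

theorem stackelCompact_of_compactSpace [T2Space X] [CompactSpace X] : StackelCompact X :=
  stackelCompact_of_continuous_injective (φ := fun x (f : {f : X → ℝ // Continuous f}) => f.1 x)
    (continuous_pi fun f => f.2) fun x y hxy => by
      by_contra hne
      obtain ⟨f, hf, hfxy⟩ := separatesPoints_continuous_of_t35Space hne
      exact hfxy (congrFun hxy ⟨f, hf⟩)

theorem StackelCompact.iInter_nonempty [T1Space X] (h : StackelCompact X) {G : ℕ → Set X}
    (hanti : Antitone G) (hclosed : ∀ n, IsClosed (G n)) (hne : ∀ n, (G n).Nonempty) :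
    (⋂ n, G n).Nonempty := by
  obtain ⟨r, hr, hext⟩ := h
  choose b hbG hbmax using fun n => (hext (G n) (hclosed n) (hne n)).2
  obtain ⟨m, hmC, hmmin⟩ := (hext (closure (range b)) isClosed_closure (range_nonempty b).closure).1
  refine ⟨m, mem_iInter.2 fun n => ?_⟩
  have hsplit : range b ⊆ b '' Iio n ∪ G n := by
    rintro _ ⟨k, rfl⟩
    rcases lt_or_ge k n with hk | hk
    exacts [Or.inl (mem_image_of_mem b hk), Or.inr (hanti hk (hbG k))]
  have hclosure := closure_minimal hsplit (((finite_Iio n).image b).isClosed.union (hclosed n)) hmC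
  rcases hclosure with ⟨k, hk, rfl⟩ | hmG
  · have hbn : b n = b k := antisymm (hbmax k (b n) (hanti hk.le (hbG n)))
      (hmmin (b n) (subset_closure (mem_range_self n)))
    exact hbn ▸ hbG n
  · exact hmG

theorem StackelCompact.countablyCompactSpace [T1Space X] (h : StackelCompact X) :
    CountablyCompactSpace X where
  isCountablyCompact_univ := isCountablyCompact_iff_seq_clusterPt.2 fun u _ => by
    obtain ⟨a, ha⟩ := h.iInter_nonempty (G := fun n => closure (u '' Ici n))
      (fun m n hmn => closure_mono (image_mono (Ici_subset_Ici.2 hmn)))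
      (fun _ => isClosed_closure) (fun n => (nonempty_Ici.image u).closure)
    exact ⟨a, mem_univ a, mapClusterPt_atTop_iff_forall_mem_closure.2 (mem_iInter.1 ha)⟩

end

/-- A Lindelöf Hausdorff space is Stäckel-compact if and only if it is compact. -/
theorem stackelCompact_iff_compact_of_lindelof (X : Type*) [TopologicalSpace X]
    [T2Space X] [LindelofSpace X] : StackelCompact X ↔ CompactSpace X :=
  ⟨fun h => have := h.countablyCompactSpace; LindelofSpace.compactSpace,
    fun _ => stackelCompact_of_compactSpace⟩
end

section
/- The space ω₁ of countable ordinals with the order topology is Stäckel-compact, i.e., there is a linear order ≺ on ω₁ (different from the usual ordinal order) such that every non-empty closed subset of ω₁ has both a ≺-least and a ≺-greatest element. -/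
/-!
Split `ω₁` into two disjoint stationary sets `Sᶜ` and `S`, and order `ω₁` by putting `Sᶜ` first,
in its usual order, followed by `S` in the reverse order. If a nonempty closed set `F` meets `Sᶜ`,
the least element of `F ∩ Sᶜ` is its least element; otherwise `F ⊆ S` is closed and misses the
stationary set `Sᶜ`, so it is not a club, hence bounded, and its maximum is its least element.
Greatest elements are found symmetrically, exchanging `S` and `Sᶜ`.

The splitting is Ulam's: enumerate each initial segment `[0, δ)` as `f δ 0, f δ 1, …`. Countable
intersections of clubs are clubs, so some `n` makes every `{δ | β < f δ n < δ}` stationary, and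
since the diagonal intersection of clubs is unbounded, one of these sets has stationary complement.
-/

open Ordinal

open Cardinal Order Set Filter

section UncountableCofinality

variable {α : Type*} [LinearOrder α]

theorem exists_forall_lt_of_countable (hα : ℵ₀ < cof α) {s : Set α} (hs : s.Countable) :
    ∃ b, ∀ x ∈ s, x < b :=
  not_isCofinal_iff.1 fun hcof =>
    ((cof_le hcof).trans (le_aleph0_iff_set_countable.2 hs)).not_gt hα

theorem nonempty_of_aleph0_lt_cof (hα : ℵ₀ < cof α) : Nonempty α :=
  not_isEmpty_iff.1 fun _ => by simp at hα

theorem noMaxOrder_of_aleph0_lt_cof (hα : ℵ₀ < cof α) : NoMaxOrder α :=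
  ⟨fun x => by simpa using exists_forall_lt_of_countable hα (countable_singleton x)⟩

theorem IsCofinal.exists_gt [NoMaxOrder α] {s : Set α} (hs : IsCofinal s) (a : α) :
    ∃ b ∈ s, a < b :=
  let ⟨a', ha'⟩ := NoMaxOrder.exists_gt a
  let ⟨b, hb, hab⟩ := hs a'
  ⟨b, hb, ha'.trans_le hab⟩

theorem exists_isLUB_of_bddAbove [WellFoundedLT α] {s : Set α} (hs : BddAbove s) :
    ∃ a, IsLUB s a :=
  ⟨wellFounded_lt.min (upperBounds s) hs, wellFounded_lt.min_mem _ hs,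
    fun _ hb => not_lt.1 (wellFounded_lt.not_lt_min _ hb)⟩

theorem DirSupClosed.mem_of_isLUB_range {C : Set α} (hC : DirSupClosed C) {g : ℕ → α}
    (hg : Monotone g) {δ : α} (hδ : IsLUB (range g) δ) (hgC : ∀ᶠ k in atTop, g k ∈ C) :
    δ ∈ C := by
  obtain ⟨k, hk⟩ := eventually_atTop.1 hgC
  have htail : upperBounds (g '' Ici k) = upperBounds (range g) := by
    refine Subset.antisymm (fun b hb => ?_) (upperBounds_mono_set (image_subset_range _ _))
    rintro _ ⟨i, rfl⟩
    exact (hg (le_max_left i k)).trans (hb (mem_image_of_mem g (le_max_right i k)))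
  exact hC (image_subset_iff.2 hk) (nonempty_Ici.image g) (.of_linearOrder _)
    ((isLUB_congr htail).2 hδ)

end UncountableCofinality

section StationarySplitting

variable {α : Type*} [LinearOrder α] [WellFoundedLT α]

theorem exists_gt_forall_lt_mem_of_isClub (hα : ℵ₀ < cof α)
    (hIio : ∀ x : α, (Iio x).Countable) {C : α → Set α} (hC : ∀ β, IsClub (C β)) (x₀ : α) :
    ∃ δ, x₀ < δ ∧ ∀ β < δ, δ ∈ C β := by
  have := noMaxOrder_of_aleph0_lt_cof hα
  have hstep (x : α) : ∃ y, x < y ∧ ∀ β ≤ x, y ∈ C β := by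
    have : Countable (Iic x) := by rw [← Iio_insert]; exact ((hIio x).insert x).to_subtype
    have hclub : IsClub (⋂ β : Iic x, C β) := .iInter_of_countable hα.ne' fun β => hC β
    obtain ⟨y, hy, hxy⟩ := hclub.isCofinal.exists_gt x
    exact ⟨y, hxy, fun β hβ => mem_iInter.1 hy ⟨β, hβ⟩⟩
  choose step hstep_gt hstep_mem using hstep
  -- The supremum of `x₀ < step x₀ < step (step x₀) < ⋯` is the required point.
  set g : ℕ → α := fun k => step^[k] x₀
  have hg_succ (k : ℕ) : g (k + 1) = step (g k) := Function.iterate_succ_apply' step k x₀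
  have hg : StrictMono g := strictMono_nat_of_lt_succ fun k => hg_succ k ▸ hstep_gt (g k)
  obtain ⟨b, hb⟩ := exists_forall_lt_of_countable hα (countable_range g)
  obtain ⟨δ, hδ⟩ := exists_isLUB_of_bddAbove ⟨b, forall_mem_range.2 fun k => (hb _ ⟨k, rfl⟩).le⟩
  refine ⟨δ, (hg zero_lt_one).trans_le (hδ.1 ⟨1, rfl⟩), fun β hβ => ?_⟩
  obtain ⟨_, ⟨k, rfl⟩, hβk⟩ := (lt_isLUB_iff hδ).1 hβ
  refine (hC β).dirSupClosed.mem_of_isLUB_range hg.monotone hδ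
    (eventually_atTop.2 ⟨k + 1, fun m hm => ?_⟩)
  obtain ⟨m, rfl⟩ := Nat.exists_eq_add_one_of_ne_zero (by omega : m ≠ 0)
  rw [hg_succ]
  exact hstep_mem _ _ (hβk.le.trans (hg.monotone (by omega)))

/-- With `f δ` an enumeration of `Iio δ`, these are the sets of an Ulam matrix. -/
def ulamSet (f : α → ℕ → α) (n : ℕ) (β : α) : Set α :=
  {δ | β < f δ n ∧ f δ n < δ}

theorem exists_forall_isStationary_ulamSet (hα : ℵ₀ < cof α) {f : α → ℕ → α}
    (hf : ∀ δ, Iio δ ⊆ range (f δ)) : ∃ n, ∀ β, IsStationary (ulamSet f n β) := by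
  have := noMaxOrder_of_aleph0_lt_cof hα
  by_contra! h
  simp_rw [not_isStationary_iff] at h
  choose β C hC hdisj using h
  obtain ⟨B, hB⟩ := exists_forall_lt_of_countable hα (countable_range β)
  obtain ⟨δ, hδ, hBδ⟩ := (IsClub.iInter_of_countable hα.ne' hC).isCofinal.exists_gt B
  obtain ⟨m, hm⟩ := hf δ hBδ
  have hδm : δ ∈ ulamSet f m (β m) := ⟨hm ▸ hB _ ⟨m, rfl⟩, hm ▸ hBδ⟩
  exact (hdisj m).notMem_of_mem_left hδm (mem_iInter.1 hδ m)

theorem exists_isStationary_compl_ulamSet (hα : ℵ₀ < cof α) (hIio : ∀ x : α, (Iio x).Countable)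
    (f : α → ℕ → α) (n : ℕ) : ∃ β, IsStationary (ulamSet f n β)ᶜ := by
  obtain ⟨x₀⟩ := nonempty_of_aleph0_lt_cof hα
  by_contra! h
  simp_rw [not_isStationary_iff, disjoint_compl_left_iff_subset] at h
  choose C hC hsub using h
  obtain ⟨δ, hx₀δ, hδ⟩ := exists_gt_forall_lt_mem_of_isClub hα hIio hC x₀
  have hfδ : f δ n < δ := (hsub _ (hδ x₀ hx₀δ)).2
  exact (hsub _ (hδ _ hfδ)).1.false

theorem exists_isStationary_and_isStationary_compl (hα : ℵ₀ < cof α)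
    (hIio : ∀ x : α, (Iio x).Countable) : ∃ s : Set α, IsStationary s ∧ IsStationary sᶜ := by
  have := nonempty_of_aleph0_lt_cof hα
  choose f hf using fun δ => countable_iff_exists_subset_range.1 (hIio δ)
  obtain ⟨n, hn⟩ := exists_forall_isStationary_ulamSet hα hf
  obtain ⟨β, hβ⟩ := exists_isStationary_compl_ulamSet hα hIio f n
  exact ⟨_, hn β, hβ⟩

end StationarySplitting

section StackelOrder

variable {α : Type*} {s : Set α} {x y : α}

open scoped Classical in
noncomputable def stackelKey (s : Set α) (x : α) : α ⊕ₗ αᵒᵈ :=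
  if x ∈ s then toLex (.inr (OrderDual.toDual x)) else toLex (.inl x)

theorem stackelKey_injective (s : Set α) : (stackelKey s).Injective := by
  intro x y h
  unfold stackelKey at h
  split_ifs at h <;> simp_all

variable [LinearOrder α]

theorem stackelKey_le_of_notMem_of_mem (hx : x ∉ s) (hy : y ∈ s) :
    stackelKey s x ≤ stackelKey s y := by
  simp [stackelKey, hx, hy]

theorem stackelKey_le_iff_of_notMem (hx : x ∉ s) (hy : y ∉ s) :
    stackelKey s x ≤ stackelKey s y ↔ x ≤ y := by
  simp [stackelKey, hx, hy]

theorem stackelKey_le_iff_of_mem (hx : x ∈ s) (hy : y ∈ s) :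
    stackelKey s x ≤ stackelKey s y ↔ y ≤ x := by
  simp [stackelKey, hx, hy]

theorem stackelKey_compl_le_iff :
    stackelKey sᶜ x ≤ stackelKey sᶜ y ↔ stackelKey s y ≤ stackelKey s x := by
  by_cases hx : x ∈ s <;> by_cases hy : y ∈ s <;> simp [stackelKey, hx, hy]

variable [TopologicalSpace α] [OrderTopology α] {F : Set α}

theorem IsClosed.dirSupClosed (hF : IsClosed F) : DirSupClosed F :=
  fun _ hd hne _ _ ha => hF.closure_subset_iff.2 hd (ha.mem_closure hne)

variable [WellFoundedLT α]

theorem IsClosed.exists_isGreatest (hF : IsClosed F) (hne : F.Nonempty) (hbdd : BddAbove F) :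
    ∃ a, IsGreatest F a :=
  let ⟨a, ha⟩ := exists_isLUB_of_bddAbove hbdd
  ⟨a, ha.mem_of_isClosed hne hF, ha.1⟩

theorem IsClosed.exists_isGreatest_of_subset (hsc : IsStationary sᶜ) (hF : IsClosed F)
    (hne : F.Nonempty) (hFs : F ⊆ s) : ∃ a, IsGreatest F a := by
  refine hF.exists_isGreatest hne (.of_not_isCofinal fun hcof => ?_)
  obtain ⟨x, hxs, hxF⟩ := hsc ⟨hF.dirSupClosed, hcof⟩
  exact hxs (hFs hxF)

theorem exists_forall_stackelKey_le (hsc : IsStationary sᶜ) (hF : IsClosed F)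
    (hne : F.Nonempty) : ∃ a ∈ F, ∀ x ∈ F, stackelKey s a ≤ stackelKey s x := by
  by_cases h : (F \ s).Nonempty
  · obtain ⟨a, ⟨haF, has⟩, hmin⟩ := wellFounded_lt.has_min _ h
    refine ⟨a, haF, fun x hxF => ?_⟩
    by_cases hxs : x ∈ s
    · exact stackelKey_le_of_notMem_of_mem has hxs
    · exact (stackelKey_le_iff_of_notMem has hxs).2 (not_lt.1 (hmin x ⟨hxF, hxs⟩))
  · have hFs : F ⊆ s := sdiff_eq_empty.1 (not_nonempty_iff_eq_empty.1 h)
    obtain ⟨a, haF, hmax⟩ := hF.exists_isGreatest_of_subset hsc hne hFs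
    exact ⟨a, haF, fun x hxF => (stackelKey_le_iff_of_mem (hFs haF) (hFs hxF)).2 (hmax hxF)⟩

theorem stackelCompact_of_isStationary (hs : IsStationary s) (hsc : IsStationary sᶜ) :
    StackelCompact α := by
  refine ⟨Function.onFun (· ≤ ·) (stackelKey s), (stackelKey_injective s).isLinearOrder_onFun _,
    fun F hF hne => ⟨exists_forall_stackelKey_le hsc hF hne, ?_⟩⟩
  obtain ⟨b, hbF, hb⟩ := exists_forall_stackelKey_le (s := sᶜ) (by rwa [compl_compl]) hF hne
  exact ⟨b, hbF, fun x hxF => stackelKey_compl_le_iff.1 (hb x hxF)⟩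

end StackelOrder

theorem Ordinal.aleph0_lt_cof_Iio_omega_one : ℵ₀ < Order.cof (Iio (ω₁ : Ordinal.{u})) := by
  simp [Ordinal.cof_Iio]

theorem Ordinal.countable_Iio_of_lt_omega_one {o : Ordinal} (ho : o < ω₁) :
    (Iio o).Countable := by
  rw [← le_aleph0_iff_set_countable, Cardinal.mk_Iio_ordinal]
  simpa [← lt_aleph_one_iff, ← Cardinal.lt_ord] using ho

/-- The space ω₁ of countable ordinals with the order topology is Stäckel-compact. -/
theorem omega1_stackelCompact :
    @StackelCompact (Set.Iio ω₁ : Set Ordinal)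
      (Preorder.topology (Set.Iio ω₁ : Set Ordinal)) := by
  let := Preorder.topology (Iio (ω₁ : Ordinal))
  have : OrderTopology (Iio (ω₁ : Ordinal)) := ⟨rfl⟩
  have hIio (x : Iio (ω₁ : Ordinal)) : (Iio x).Countable := by
    simpa using (countable_Iio_of_lt_omega_one x.2).preimage
      (Subtype.val_injective (p := (· ∈ Iio ω₁)))
  obtain ⟨s, hs, hsc⟩ :=
    exists_isStationary_and_isStationary_compl aleph0_lt_cof_Iio_omega_one hIio
  exact stackelCompact_of_isStationary hs hsc
end

section
/- If X is a Stäckel-compact Hausdorff space and Y is a compact Hausdorff space, then the product X × Y is Stäckel-compact; moreover, the lexicographic order built from symmetric topological well orders on X and Y witnesses this. -/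
/-- The lexicographic order on a product built from orders on the factors. -/
def prodLex {X Y : Type*} (rX : X → X → Prop) (rY : Y → Y → Prop)
    (p q : X × Y) : Prop :=
  (rX p.1 q.1 ∧ p.1 ≠ q.1) ∨ (p.1 = q.1 ∧ rY p.2 q.2)

def strictPart {α : Type*} (r : α → α → Prop) (a b : α) : Prop := r a b ∧ a ≠ b

section StrictPart

variable {α : Type*} {r : α → α → Prop}

instance [IsPartialOrder α r] : IsStrictOrder α (strictPart r) where
  irrefl _ h := h.2 rfl
  trans _ _ _ hab hbc :=
    ⟨_root_.trans hab.1 hbc.1, fun hac => hab.2 (antisymm hab.1 (hac ▸ hbc.1))⟩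

instance [Std.Total r] : Std.Trichotomous (strictPart r) where
  trichotomous a b hab hba := by
    by_contra hne
    rcases total_of r a b with h | h
    exacts [hab ⟨h, hne⟩, hba ⟨h, Ne.symm hne⟩]

end StrictPart

section ProdLex

variable {X Y : Type*} (rX : X → X → Prop) (rY : Y → Y → Prop)

theorem prodLex_eq_lex_strictPart : prodLex rX rY = Prod.Lex (strictPart rX) rY := by
  funext p q
  rw [Prod.lex_def]
  rfl

theorem prodLex_flip : prodLex (flip rX) (flip rY) = flip (prodLex rX rY) := by
  funext p q
  simp only [prodLex, flip, ne_comm, eq_comm]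

instance [IsLinearOrder X rX] [IsLinearOrder Y rY] : IsLinearOrder (X × Y) (prodLex rX rY) := by
  rw [prodLex_eq_lex_strictPart]
  exact {}

end ProdLex

section Topology

variable {X Y : Type*} [TopologicalSpace X] [TopologicalSpace Y]

def ClosedSetsHaveLeast (r : X → X → Prop) : Prop :=
  ∀ F : Set X, IsClosed F → F.Nonempty → ∃ a ∈ F, ∀ x ∈ F, r a x

theorem ClosedSetsHaveLeast.prodLex [CompactSpace Y] {rX : X → X → Prop} {rY : Y → Y → Prop}
    (hX : ClosedSetsHaveLeast rX) (hY : ClosedSetsHaveLeast rY) :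
    ClosedSetsHaveLeast (prodLex rX rY) := by
  intro F hF hne
  obtain ⟨_, ⟨p, hpF, rfl⟩, hp_least⟩ :=
    hX _ (isClosedMap_fst_of_compactSpace F hF) (hne.image Prod.fst)
  obtain ⟨b, hb, hb_least⟩ :=
    hY {y | (p.1, y) ∈ F} (hF.preimage (Continuous.prodMk_right p.1)) ⟨p.2, hpF⟩
  refine ⟨(p.1, b), hb, fun q hq => ?_⟩
  rcases eq_or_ne p.1 q.1 with h | h
  · exact Or.inr ⟨h, hb_least q.2 (show (p.1, q.2) ∈ F by rwa [h])⟩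
  · exact Or.inl ⟨hp_least q.1 ⟨q, hq, rfl⟩, h⟩

end Topology

theorem stackelCompact_prod_general {X Y : Type*} [TopologicalSpace X] [TopologicalSpace Y]
    [CompactSpace Y]
    (rX : X → X → Prop) (rY : Y → Y → Prop)
    (hlinX : IsLinearOrder X rX) (hlinY : IsLinearOrder Y rY)
    (hX : ∀ F : Set X, IsClosed F → F.Nonempty →
      (∃ a ∈ F, ∀ x ∈ F, rX a x) ∧ (∃ b ∈ F, ∀ x ∈ F, rX x b))
    (hY : ∀ F : Set Y, IsClosed F → F.Nonempty →
      (∃ a ∈ F, ∀ x ∈ F, rY a x) ∧ (∃ b ∈ F, ∀ x ∈ F, rY x b)) :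
    StackelCompact (X × Y) ∧
    (IsLinearOrder (X × Y) (prodLex rX rY) ∧
      ∀ F : Set (X × Y), IsClosed F → F.Nonempty →
        (∃ a ∈ F, ∀ x ∈ F, prodLex rX rY a x) ∧
        (∃ b ∈ F, ∀ x ∈ F, prodLex rX rY x b)) := by
  have hlin : IsLinearOrder (X × Y) (prodLex rX rY) := inferInstance
  have hleast : ClosedSetsHaveLeast (prodLex rX rY) :=
    .prodLex (fun F hF hne => (hX F hF hne).1) (fun F hF hne => (hY F hF hne).1)
  have hgreatest : ClosedSetsHaveLeast (flip (prodLex rX rY)) := by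
    rw [← prodLex_flip]
    exact .prodLex (fun F hF hne => (hX F hF hne).2) (fun F hF hne => (hY F hF hne).2)
  have hextrema F hF hne := And.intro (hleast F hF hne) (hgreatest F hF hne)
  exact ⟨⟨_, hlin, hextrema⟩, hlin, hextrema⟩

/-- If X is Stäckel-compact Hausdorff (with symmetric topological well order rX) and Y is
compact Hausdorff (with symmetric topological well order rY), then X × Y is
Stäckel-compact; moreover the lexicographic order built from rX and rY witnesses this. -/
theorem stackelCompact_prod {X Y : Type*} [TopologicalSpace X] [TopologicalSpace Y]
    [T2Space X] [T2Space Y] [CompactSpace Y]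
    (rX : X → X → Prop) (rY : Y → Y → Prop)
    (hlinX : IsLinearOrder X rX) (hlinY : IsLinearOrder Y rY)
    (hX : ∀ F : Set X, IsClosed F → F.Nonempty →
      (∃ a ∈ F, ∀ x ∈ F, rX a x) ∧ (∃ b ∈ F, ∀ x ∈ F, rX x b))
    (hY : ∀ F : Set Y, IsClosed F → F.Nonempty →
      (∃ a ∈ F, ∀ x ∈ F, rY a x) ∧ (∃ b ∈ F, ∀ x ∈ F, rY x b)) :
    StackelCompact (X × Y) ∧
    (IsLinearOrder (X × Y) (prodLex rX rY) ∧
      ∀ F : Set (X × Y), IsClosed F → F.Nonempty →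
        (∃ a ∈ F, ∀ x ∈ F, prodLex rX rY a x) ∧
        (∃ b ∈ F, ∀ x ∈ F, prodLex rX rY x b)) :=
  stackelCompact_prod_general rX rY hlinX hlinY hX hY
end

section
/- For every ordinal ρ < ω₂, there exist disjoint sets A, B ⊆ ρ such that for every ordinal β ≤ ρ of uncountable cofinality, both A ∩ β and B ∩ β are stationary in β. -/
open Ordinal

def IsClosedIn (C : Set Ordinal) (β : Ordinal) : Prop :=
  ∀ a < β, (C ∩ Set.Iio a).Nonempty → sSup (C ∩ Set.Iio a) = a → a ∈ C

def IsUnboundedIn (C : Set Ordinal) (β : Ordinal) : Prop :=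
  ∀ a < β, ∃ c ∈ C, c < β ∧ a < c

def IsClubIn (C : Set Ordinal) (β : Ordinal) : Prop :=
  IsClosedIn C β ∧ IsUnboundedIn C β

def IsStationaryIn (S : Set Ordinal) (β : Ordinal) : Prop :=
  ∀ C : Set Ordinal, C ⊆ Set.Iio β → IsClubIn C β → (S ∩ C).Nonempty

/-! Induction on `ρ`. At a limit `ρ`, let `δ = cf ρ ≤ ω₁` and let `g` be a normal function with
`g 0 = 0` and `g δ = ρ`. Copy two disjoint stationary subsets of `ω₁` (Ulam) onto the club
`range g`, and the two sets given by induction for `g (ξ + 1)` into the gaps `(g ξ, g (ξ + 1))`.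
An ordinal `β < ρ` of uncountable cofinality is not a limit point `g ξ` with `ξ < ω₁`, so it lies
in the closure of a single gap, where the inductive sets already reflect; and if `cf ρ = ω₁`,
every club in `ρ` pulls back along `g` to a club in `ω₁`, which meets both stationary sets. -/

open Cardinal Order Set

universe u

section Clubs

variable {C T : Set Ordinal} {β x : Ordinal}

theorem IsClosedIn.mem_of_subset_of_sSup_eq (hC : IsClosedIn C β) (hx : x < β)
    (hT : T ⊆ C ∩ Iio x) (hne : T.Nonempty) (hsup : sSup T = x) : x ∈ C := by
  subst hsup
  refine hC _ hx (hne.mono hT) (le_antisymm (csSup_le (hne.mono hT) fun y hy ↦ hy.2.le) ?_)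
  exact csSup_le_csSup Ordinal.bddAbove_of_small hne hT

theorem IsClosedIn.iSup_mem (hC : IsClosedIn C β) {y : ℕ → Ordinal}
    (hy : ∀ n, ∃ c ∈ C, y n ≤ c ∧ c < y (n + 1)) (hlt : ⨆ n, y n < β) : ⨆ n, y n ∈ C := by
  choose c hcC hyc hcy using hy
  have hcs : ∀ n, c n < ⨆ n, y n := fun n ↦
    (hcy n).trans_le (le_ciSup Ordinal.bddAbove_of_small (n + 1))
  refine hC.mem_of_subset_of_sSup_eq hlt (T := range c) ?_ (range_nonempty c) ?_
  · rintro _ ⟨n, rfl⟩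
    exact ⟨hcC n, hcs n⟩
  · refine le_antisymm (csSup_le (range_nonempty c) ?_) (ciSup_le fun n ↦ ?_)
    · rintro _ ⟨n, rfl⟩
      exact (hcs n).le
    · exact (hyc n).trans (le_csSup Ordinal.bddAbove_of_small ⟨n, rfl⟩)

theorem isClubIn_iInter (hβ : ℵ₀ < β.cof) {C : ℕ → Set Ordinal} (hC : ∀ n, IsClubIn (C n) β) :
    IsClubIn (⋂ n, C n) β := by
  refine ⟨fun a ha hne hsup ↦ mem_iInter.2 fun n ↦ (hC n).1.mem_of_subset_of_sSup_eq ha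
    (fun y hy ↦ ⟨mem_iInter.1 hy.1 n, hy.2⟩) hne hsup, fun a ha ↦ ?_⟩
  have hlim : IsSuccLimit β := one_lt_cof_iff.1 (one_lt_aleph0.trans hβ)
  have hnext : ∀ n b, ∃ c, b < β → c ∈ C n ∧ c < β ∧ b < c := fun n b ↦ by
    by_cases hb : b < β
    · obtain ⟨c, hc⟩ := (hC n).2 b hb
      exact ⟨c, fun _ ↦ hc⟩
    · exact ⟨0, fun h ↦ absurd h hb⟩
  choose next hnext using hnext
  -- `f b` bounds a point of every `C n` above `b`, so the iterates of `f` interleave each `C n`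
  set f : Ordinal → Ordinal := fun b ↦ succ (⨆ n, next n b)
  have hf : ∀ b < β, f b < β := fun b hb ↦ hlim.succ_lt <|
    lift_iSup_lt_of_lt_cof (by simpa using hβ) fun n ↦ (hnext n b hb).2.1
  have hiter : ∀ k, f^[k] a < β := fun k ↦ (MapsTo.iterate (fun b hb ↦ hf b hb) k) ha
  have hnfp : nfp f a < β := nfp_lt_ord hβ hf ha
  refine ⟨nfp f a, mem_iInter.2 fun n ↦ ?_, hnfp, ?_⟩
  · rw [← iSup_iterate_eq_nfp] at hnfp ⊢
    refine (hC n).1.iSup_mem (fun k ↦ ?_) hnfp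
    obtain ⟨hcC, -, hkc⟩ := hnext n _ (hiter k)
    refine ⟨next n (f^[k] a), hcC, hkc.le, ?_⟩
    rw [Function.iterate_succ_apply']
    exact lt_succ_iff.2 (le_ciSup Ordinal.bddAbove_of_small n)
  · exact (hnext 0 a ha).2.2.trans_le <| (le_ciSup Ordinal.bddAbove_of_small 0).trans <|
      (le_succ _).trans (iterate_le_nfp f a 1)

end Clubs

section Stationary

variable {S T : Set Ordinal} {α β : Ordinal}

theorem IsStationaryIn.mono (hS : IsStationaryIn S β) (hST : S ∩ Iio β ⊆ T) :
    IsStationaryIn T β := fun C hCβ hC ↦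
  let ⟨x, hxS, hxC⟩ := hS C hCβ hC
  ⟨x, hST ⟨hxS, hCβ hxC⟩, hxC⟩

theorem IsClubIn.inter_Ioi {C : Set Ordinal} (hC : IsClubIn C β) (hα : α < β) :
    IsClubIn (C ∩ Ioi α) β := by
  refine ⟨fun a ha hne hsup ↦ ⟨hC.1.mem_of_subset_of_sSup_eq ha
    (fun y hy ↦ ⟨hy.1.1, hy.2⟩) hne hsup, ?_⟩, fun a ha ↦ ?_⟩
  · obtain ⟨y, hy⟩ := hne
    exact lt_trans (mem_Ioi.1 hy.1.2) (mem_Iio.1 hy.2)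
  · obtain ⟨c, hcC, hcβ, hac⟩ := hC.2 (max a α) (max_lt ha hα)
    exact ⟨c, ⟨hcC, (le_max_right a α).trans_lt hac⟩, hcβ, (le_max_left a α).trans_lt hac⟩

theorem IsStationaryIn.inter_Ioi (hS : IsStationaryIn S β) (hα : α < β) :
    IsStationaryIn (S ∩ Ioi α) β := fun _ hCβ hC ↦
  let ⟨x, hxS, hxC⟩ := hS _ (fun _ hy ↦ hCβ hy.1) (hC.inter_Ioi hα)
  ⟨x, ⟨hxS, hxC.2⟩, hxC.1⟩

theorem exists_isStationaryIn_of_Ioo_subset_iUnion (hβ : ℵ₀ < β.cof) (hα : α < β)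
    {S : ℕ → Set Ordinal} (hS : Ioo α β ⊆ ⋃ n, S n) : ∃ n, IsStationaryIn (S n) β := by
  by_contra! h
  simp only [IsStationaryIn, not_forall, not_nonempty_iff_eq_empty] at h
  choose C _ hC hSC using h
  obtain ⟨x, hx, hxβ, hαx⟩ := (isClubIn_iInter hβ hC).2 α hα
  obtain ⟨n, hn⟩ := mem_iUnion.1 (hS ⟨hαx, hxβ⟩)
  exact (hSC n).subset ⟨hn, mem_iInter.1 hx n⟩

end Stationary

theorem countable_Iio_iff_lt_omega_one {o : Ordinal} : (Iio o).Countable ↔ o < ω₁ := by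
  rw [← le_aleph0_iff_set_countable, Cardinal.mk_Iio_ordinal, lift_le_aleph0, ← ord_aleph, lt_ord,
    ← succ_aleph0, lt_succ_iff]

/-- Ulam matrix: given injections `e α : Iio α → ℕ` for `α < ω₁`, every `b < ω₁` has a stationary
row `{α | b < α, e α b = n}`; by pigeonhole two different `b` share the same `n`, and two such rows
are disjoint. -/
theorem exists_disjoint_isStationaryIn_omega_one :
    ∃ S T : Set Ordinal, Disjoint S T ∧ IsStationaryIn S ω₁ ∧ IsStationaryIn T ω₁ := by
  have hinj : ∀ α : Ordinal, ∃ e : Ordinal → ℕ, α < ω₁ → InjOn e (Iio α) := fun α ↦ by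
    by_cases hα : α < ω₁
    · obtain ⟨e, he⟩ := countable_iff_exists_injOn.1 (countable_Iio_iff_lt_omega_one.2 hα)
      exact ⟨e, fun _ ↦ he⟩
    · exact ⟨0, fun h ↦ absurd h hα⟩
  choose e he using hinj
  set row : ℕ → Ordinal → Set Ordinal := fun n b ↦ {α | α < ω₁ ∧ b < α ∧ e α b = n}
  have hrow : ∀ b, ∃ n, b < ω₁ → IsStationaryIn (row n b) ω₁ := fun b ↦ by
    by_cases hb : b < ω₁
    · obtain ⟨n, hn⟩ := exists_isStationaryIn_of_Ioo_subset_iUnion (S := fun n ↦ row n b)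
        (by rw [cof_omega_one]; exact aleph0_lt_aleph_one) hb
        fun α hα ↦ mem_iUnion.2 ⟨e α b, hα.2, hα.1, rfl⟩
      exact ⟨n, fun _ ↦ hn⟩
    · exact ⟨0, fun h ↦ absurd h hb⟩
  choose N hN using hrow
  obtain ⟨b₁, hb₁, b₂, hb₂, hN₁₂, hb₁₂⟩ : ∃ b₁ < ω₁, ∃ b₂ < ω₁, N b₁ = N b₂ ∧ b₁ ≠ b₂ := by
    by_contra! h
    exact (lt_irrefl ω₁) (countable_Iio_iff_lt_omega_one.1
      (countable_iff_exists_injOn.2 ⟨N, h⟩))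
  refine ⟨row (N b₁) b₁, row (N b₂) b₂, disjoint_left.2 ?_, hN b₁ hb₁, hN b₂ hb₂⟩
  rintro α ⟨hα, hb₁α, he₁⟩ ⟨-, hb₂α, he₂⟩
  exact hb₁₂ (he α hα hb₁α hb₂α (by rw [he₁, he₂, hN₁₂]))

theorem isNormal_iSup_add_one {F : Ordinal.{u} → Ordinal.{u}} (hF : StrictMono F) :
    IsNormal fun ξ ↦ ⨆ η : Iio ξ, F η.1 + 1 := by
  have hle : ∀ {η ξ}, η < ξ → F η + 1 ≤ ⨆ η : Iio ξ, F η.1 + 1 := fun h ↦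
    le_ciSup (f := fun η : Iio _ ↦ F η.1 + 1) Ordinal.bddAbove_of_small ⟨_, h⟩
  have hge : ∀ ξ, ⨆ η : Iio ξ, F η.1 + 1 ≤ F ξ := fun ξ ↦
    ciSup_le' fun η ↦ add_one_le_iff.2 (hF η.2)
  refine IsNormal.of_succ_lt (fun ξ ↦ (hge ξ).trans_lt
    ((lt_add_one _).trans_le (hle (lt_succ ξ)))) fun hξ ↦ ⟨?_, fun b hb ↦ ?_⟩
  · rintro _ ⟨η, hη, rfl⟩
    exact (hge η).trans (le_self_add.trans (hle hη))
  · exact ciSup_le' fun η ↦ (hle (lt_succ η.1)).trans (hb ⟨_, hξ.succ_lt η.2, rfl⟩)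

theorem exists_isNormal_map_ord_cof (ρ : Ordinal) :
    ∃ g : Ordinal → Ordinal, IsNormal g ∧ g 0 = 0 ∧ g ρ.cof.ord = ρ := by
  obtain ⟨f, hf⟩ := exists_isFundamentalSeq (o := ρ) rfl
  set F : Ordinal → Ordinal := fun η ↦ if h : η < ρ.cof.ord then (f ⟨η, h⟩).1 else ρ + η
  have hF : StrictMono F := by
    intro η ζ hηζ
    by_cases hζ : ζ < ρ.cof.ord
    · simp only [F, dif_pos (hηζ.trans hζ), dif_pos hζ]
      exact hf.strictMono (Subtype.mk_lt_mk.2 hηζ)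
    by_cases hη : η < ρ.cof.ord
    · simp only [F, dif_pos hη, dif_neg hζ]
      exact (f _).2.trans_le le_self_add
    · simp only [F, dif_neg hη, dif_neg hζ]
      exact (add_lt_add_iff_left ρ).2 hηζ
  refine ⟨_, isNormal_iSup_add_one hF, by simp, ?_⟩
  refine (iSup_congr fun η : Iio ρ.cof.ord ↦ ?_).trans hf.iSup_add_one_eq
  simp only [F, dif_pos (mem_Iio.1 η.2)]

section Normal

variable {g : Ordinal.{u} → Ordinal.{u}} {C S : Set Ordinal.{u}} {o : Ordinal.{u}}

theorem IsClosedIn.preimage_of_isNormal (hg : IsNormal g) (hC : IsClosedIn C (g o)) :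
    IsClosedIn {ξ | ξ < o ∧ g ξ ∈ C} o := by
  intro a ha hne hsup
  refine ⟨ha, hC.mem_of_subset_of_sSup_eq (hg.strictMono ha) ?_ (hne.image g)
    (by rw [← hg.map_sSup hne Ordinal.bddAbove_of_small, hsup])⟩
  rintro _ ⟨ξ, hξ, rfl⟩
  exact ⟨hξ.1.2, hg.strictMono hξ.2⟩

theorem IsClubIn.preimage_of_isNormal (hg : IsNormal g) (ho : ℵ₀ < o.cof)
    (hC : IsClubIn C (g o)) : IsClubIn {ξ | ξ < o ∧ g ξ ∈ C} o := by
  refine ⟨hC.1.preimage_of_isNormal hg, fun a ha ↦ ?_⟩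
  have hlim : IsSuccLimit o := one_lt_cof_iff.1 (one_lt_aleph0.trans ho)
  have hstep : ∀ b, ∃ ζ, b < o → ζ < o ∧ b < ζ ∧ ∃ c ∈ C, g b ≤ c ∧ c < g ζ := fun b ↦ by
    by_cases hb : b < o
    · obtain ⟨c, hcC, hco, hbc⟩ := hC.2 (g b) (hg.strictMono hb)
      obtain ⟨ζ, hζ, hcζ⟩ := (hg.lt_iff_exists_lt hlim).1 hco
      exact ⟨max ζ (succ b), fun _ ↦ ⟨max_lt hζ (hlim.succ_lt hb),
        (lt_succ b).trans_le (le_max_right _ _),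
        c, hcC, hbc.le, hcζ.trans_le (hg.monotone (le_max_left _ _))⟩⟩
    · exact ⟨0, fun h ↦ absurd h hb⟩
  choose f hf using hstep
  have hfo : MapsTo f (Iio o) (Iio o) := fun b hb ↦ (hf b hb).1
  have hnfp : nfp f a < o := nfp_lt_ord ho (fun b hb ↦ hfo hb) ha
  have hgnfp : g (nfp f a) = ⨆ k, g (f^[k] a) := by
    rw [← iSup_iterate_eq_nfp, hg.map_iSup Ordinal.bddAbove_of_small]
  refine ⟨nfp f a, ⟨hnfp, hgnfp ▸ hC.1.iSup_mem (fun k ↦ ?_) (hgnfp ▸ hg.strictMono hnfp)⟩,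
    hnfp, (hf a ha).2.1.trans_le (iterate_le_nfp f a 1)⟩
  obtain ⟨-, -, c, hcC, hbc, hcζ⟩ := hf _ (hfo.iterate k ha)
  exact ⟨c, hcC, hbc, by rwa [Function.iterate_succ_apply']⟩

theorem IsStationaryIn.image_of_isNormal (hg : IsNormal g) (ho : ℵ₀ < o.cof)
    (hS : IsStationaryIn S o) : IsStationaryIn (g '' S) (g o) := fun _ _ hC ↦
  let ⟨ξ, hξS, hξ⟩ := hS _ (fun _ h ↦ h.1) (hC.preimage_of_isNormal hg ho)
  ⟨g ξ, mem_image_of_mem g hξS, hξ.2⟩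

theorem Order.IsNormal.exists_map_lt_le_map_succ_or_isSuccLimit (hg : IsNormal g) (hg0 : g 0 = 0)
    {β δ : Ordinal} (hβ0 : β ≠ 0) (hβ : β ≤ g δ) :
    (∃ η, g η < β ∧ β ≤ g (succ η)) ∨ ∃ ξ ≤ δ, IsSuccLimit ξ ∧ g ξ = β := by
  obtain ⟨a, hga, hβa⟩ := hg.exists_map_le_lt_map_succ_of_exists_ge ⟨δ, hβ⟩
    (by rw [Ordinal.bot_eq_zero, hg0]; exact zero_le)
  obtain hlt | heq := hga.lt_or_eq
  · exact .inl ⟨a, hlt, hβa.le⟩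
  obtain rfl | ⟨η, rfl⟩ | ha := zero_or_succ_or_isSuccLimit a
  · exact absurd (heq.symm.trans hg0) hβ0
  · exact .inl ⟨η, heq ▸ hg.strictMono (lt_succ η), heq.ge⟩
  · exact .inr ⟨a, hg.strictMono.le_iff_le.1 (heq ▸ hβ), ha, heq⟩

end Normal

theorem Monotone.apply_notMem_Ioo_succ {α β : Type*} [LinearOrder α] [SuccOrder α] [Preorder β]
    {g : α → β} (hg : Monotone g) (ξ η : α) : g η ∉ Ioo (g ξ) (g (succ ξ)) := fun h ↦
  h.2.not_ge (hg (succ_le_of_lt (hg.reflect_lt h.1)))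

def IsStationaryUpTo (A : Set Ordinal) (ρ : Ordinal) : Prop :=
  ∀ β ≤ ρ, ℵ₀ < β.cof → IsStationaryIn A β

theorem isStationaryUpTo_zero (A : Set Ordinal) : IsStationaryUpTo A 0 := fun β hβ hcof ↦ by
  rw [nonpos_iff_eq_zero.1 hβ, Ordinal.cof_zero] at hcof
  exact absurd hcof (not_lt_of_ge zero_le)

theorem IsStationaryUpTo.succ {A : Set Ordinal} {σ : Ordinal} (hA : IsStationaryUpTo A σ) :
    IsStationaryUpTo A (succ σ) := fun β hβ hcof ↦ by
  obtain rfl | hβ := hβ.eq_or_lt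
  · rw [succ_eq_add_one, Ordinal.cof_add_one] at hcof
    exact absurd hcof (not_lt_of_ge one_le_aleph0)
  · exact hA β (lt_succ_iff.1 hβ) hcof

def glue (g : Ordinal → Ordinal) (δ : Ordinal) (S : Set Ordinal) (W : Ordinal → Set Ordinal) :
    Set Ordinal :=
  g '' (S ∩ Iio δ) ∪ ⋃ ξ ∈ Iio δ, W ξ ∩ Ioo (g ξ) (g (succ ξ))

section Glue

variable {g : Ordinal.{u} → Ordinal.{u}} {δ : Ordinal.{u}} {S S' : Set Ordinal.{u}}
  {W W' : Ordinal.{u} → Set Ordinal.{u}}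

theorem disjoint_glue (hg : StrictMono g) (hS : Disjoint S S')
    (hW : ∀ ξ < δ, Disjoint (W ξ) (W' ξ)) : Disjoint (glue g δ S W) (glue g δ S' W') := by
  simp only [glue, disjoint_left, mem_union, mem_image, mem_iUnion₂]
  rintro _ (⟨ξ, ⟨hξ, -⟩, rfl⟩ | ⟨ξ, hξ, hxW, hxξ⟩) (⟨η, ⟨hη, -⟩, hgη⟩ | ⟨η, -, hxW', hxη⟩)
  · exact disjoint_left.1 hS hξ (hg.injective hgη ▸ hη)
  · exact hg.monotone.apply_notMem_Ioo_succ η ξ hxη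
  · exact hg.monotone.apply_notMem_Ioo_succ ξ η (hgη ▸ hxξ)
  · obtain rfl | hξη := eq_or_ne ξ η
    · exact disjoint_left.1 (hW ξ hξ) hxW hxW'
    · exact disjoint_left.1 (hg.monotone.pairwise_disjoint_on_Ioo_succ hξη) hxξ hxη

theorem isStationaryUpTo_glue (hg : IsNormal g) (hg0 : g 0 = 0) (hδ : δ ≤ ω₁)
    (hS : IsStationaryIn S ω₁) (hW : ∀ ξ < δ, IsStationaryUpTo (W ξ) (g (succ ξ))) :
    IsStationaryUpTo (glue g δ S W) (g δ) := by
  intro β hβ hcof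
  have hβ0 : β ≠ 0 := by
    rintro rfl
    rw [Ordinal.cof_zero] at hcof
    exact not_lt_of_ge zero_le hcof
  obtain ⟨η, hηβ, hβη⟩ | ⟨ξ, hξδ, hξ, rfl⟩ :=
    hg.exists_map_lt_le_map_succ_or_isSuccLimit hg0 hβ0 hβ
  · have hηδ : η < δ := hg.strictMono.lt_iff_lt.1 (hηβ.trans_le hβ)
    exact ((hW η hηδ β hβη hcof).inter_Ioi hηβ).mono fun x hx ↦
      .inr (mem_iUnion₂.2 ⟨η, hηδ, hx.1.1, hx.1.2, (mem_Iio.1 hx.2).trans_le hβη⟩)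
  -- a limit point `g ξ` of uncountable cofinality must be `g ω₁`
  rw [Ordinal.cof_map_of_isNormal hg hξ] at hcof
  obtain rfl : ξ = ω₁ := (hξδ.trans hδ).antisymm <| not_lt.1 fun h ↦
    hcof.ne' (cof_eq_aleph0_of_isSuccLimit hξ h)
  obtain rfl : δ = ω₁ := hδ.antisymm hξδ
  exact ((hS.mono subset_rfl).image_of_isNormal hg hcof).mono fun x hx ↦ .inl hx.1

end Glue

theorem exists_disjoint_isStationaryUpTo_of_isSuccLimit {ρ : Ordinal} (hρ : IsSuccLimit ρ)
    (hρ₂ : ρ < ω_ 2)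
    (IH : ∀ σ < ρ, ∃ A B, Disjoint A B ∧ IsStationaryUpTo A σ ∧ IsStationaryUpTo B σ) :
    ∃ A B, Disjoint A B ∧ IsStationaryUpTo A ρ ∧ IsStationaryUpTo B ρ := by
  obtain ⟨g, hg, hg0, hgδ⟩ := exists_isNormal_map_ord_cof ρ
  set δ := ρ.cof.ord
  have hδlim : IsSuccLimit δ := isSuccLimit_ord (aleph0_le_cof_iff.2 (one_lt_cof_iff.2 hρ))
  have hδ : δ ≤ ω₁ := by
    have hcard : ρ.card < ℵ_ 2 := lt_ord.1 (by rwa [ord_aleph])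
    rw [← ord_aleph, ord_le_ord]
    refine (cof_le_card ρ).trans ?_
    rwa [← one_add_one_eq_two, ← succ_aleph, lt_succ_iff] at hcard
  have hpieces : ∀ ξ, ∃ A B, Disjoint A B ∧
      (ξ < δ → IsStationaryUpTo A (g (succ ξ)) ∧ IsStationaryUpTo B (g (succ ξ))) := fun ξ ↦ by
    by_cases hξ : ξ < δ
    · obtain ⟨A, B, hAB, hA, hB⟩ := IH _ (hgδ ▸ hg.strictMono (hδlim.succ_lt hξ))
      exact ⟨A, B, hAB, fun _ ↦ ⟨hA, hB⟩⟩
    · exact ⟨∅, ∅, disjoint_empty _, fun h ↦ absurd h hξ⟩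
  choose A B hAB hst using hpieces
  obtain ⟨S, T, hST, hS, hT⟩ := exists_disjoint_isStationaryIn_omega_one
  refine ⟨glue g δ S A, glue g δ T B, disjoint_glue hg.strictMono hST fun ξ _ ↦ hAB ξ, ?_, ?_⟩
  · exact hgδ ▸ isStationaryUpTo_glue hg hg0 hδ hS fun ξ hξ ↦ (hst ξ hξ).1
  · exact hgδ ▸ isStationaryUpTo_glue hg hg0 hδ hT fun ξ hξ ↦ (hst ξ hξ).2

theorem exists_disjoint_isStationaryUpTo (ρ : Ordinal) (hρ : ρ < ω_ 2) :
    ∃ A B, Disjoint A B ∧ IsStationaryUpTo A ρ ∧ IsStationaryUpTo B ρ := by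
  induction ρ using WellFoundedLT.induction with
  | _ ρ IH =>
    obtain rfl | ⟨σ, rfl⟩ | hlim := zero_or_succ_or_isSuccLimit ρ
    · exact ⟨∅, ∅, disjoint_empty _, isStationaryUpTo_zero _, isStationaryUpTo_zero _⟩
    · obtain ⟨A, B, hAB, hA, hB⟩ := IH σ (lt_succ σ) ((lt_succ σ).trans hρ)
      exact ⟨A, B, hAB, hA.succ, hB.succ⟩
    · exact exists_disjoint_isStationaryUpTo_of_isSuccLimit hlim hρ
        fun σ hσ ↦ IH σ hσ (hσ.trans hρ)

/-- For every ordinal ρ < ω₂ there exist disjoint sets A, B ⊆ ρ such that for every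
β ≤ ρ of uncountable cofinality, both A ∩ β and B ∩ β are stationary in β. -/
theorem exists_disjoint_reflecting_everywhere (ρ : Ordinal) (hρ : ρ < ω_ 2) :
    ∃ A B : Set Ordinal, A ⊆ Set.Iio ρ ∧ B ⊆ Set.Iio ρ ∧ Disjoint A B ∧
      ∀ β ≤ ρ, Cardinal.aleph0 < β.cof →
        IsStationaryIn A β ∧ IsStationaryIn B β := by
  obtain ⟨A, B, hAB, hA, hB⟩ := exists_disjoint_isStationaryUpTo ρ hρ
  refine ⟨A ∩ Iio ρ, B ∩ Iio ρ, inter_subset_right, inter_subset_right,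
    hAB.mono inter_subset_left inter_subset_left, fun β hβ hcof ↦ ⟨?_, ?_⟩⟩
  · exact (hA β hβ hcof).mono (inter_subset_inter_right A (Iio_subset_Iio hβ))
  · exact (hB β hβ hcof).mono (inter_subset_inter_right B (Iio_subset_Iio hβ))
end

section
/- Let X be a Hausdorff space containing two disjoint subsets A and B such that every infinite subset of X has a limit point in A and also a limit point in B. Then X is Stäckel-compact: ordering X with A well-ordered first, followed by X \ A reverse well-ordered, gives a linear order in which every non-empty closed subset has a least and a greatest element. -/
open Filter

/-!
A closed set meeting neither `A` nor `B` has no limit point in that set, so it is finite. Now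
order `X` by a well-order `≤`, kept on `A` and reversed on `X \ A`, with `A` placed first. A
non-empty closed set `F` meeting `A` has as least element the `≤`-least point of `F ∩ A`;
otherwise `F` misses `A` and is finite. Dually, if `F ⊄ A` its greatest element is the `≤`-least
point of `F \ A`; otherwise `F ⊆ A` misses `B` and is finite.
-/

theorem IsClosed.finite_of_disjoint {X : Type*} [TopologicalSpace X] {A F : Set X}
    (hacc : ∀ S : Set X, S.Infinite → ∃ a ∈ A, AccPt a (𝓟 S)) (hF : IsClosed F)
    (hFA : Disjoint F A) : F.Finite := by
  by_contra hinf
  obtain ⟨a, haA, ha⟩ := hacc F hinf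
  exact hFA.ne_of_mem (isClosed_iff_accPt.mp hF a ha) haA rfl

namespace Set

variable {α : Type*} (A : Set α)

/-- Reading `α` through this key keeps the order on `A`, reverses it on `Aᶜ`, and puts `A`
before `Aᶜ`. -/
noncomputable def lexKeyReverseCompl (x : α) : α ⊕ₗ αᵒᵈ :=
  open Classical in
  if x ∈ A then toLex (.inl x) else toLex (.inr (OrderDual.toDual x))

variable {A}

theorem lexKeyReverseCompl_of_mem {x : α} (hx : x ∈ A) :
    A.lexKeyReverseCompl x = toLex (.inl x) := if_pos hx

theorem lexKeyReverseCompl_of_notMem {x : α} (hx : x ∉ A) :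
    A.lexKeyReverseCompl x = toLex (.inr (OrderDual.toDual x)) := if_neg hx

theorem lexKeyReverseCompl_injective : Function.Injective A.lexKeyReverseCompl := by
  intro x y hxy
  by_cases hx : x ∈ A <;> by_cases hy : y ∈ A <;>
    simp [lexKeyReverseCompl_of_mem, lexKeyReverseCompl_of_notMem, hx, hy] at hxy <;>
    exact hxy

variable [LinearOrder α]

theorem lexKeyReverseCompl_le_of_mem_of_notMem {a x : α} (ha : a ∈ A) (hx : x ∉ A) :
    A.lexKeyReverseCompl a ≤ A.lexKeyReverseCompl x := by
  rw [lexKeyReverseCompl_of_mem ha, lexKeyReverseCompl_of_notMem hx]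
  exact Sum.Lex.inl_le_inr _ _

theorem lexKeyReverseCompl_le_iff_of_mem {x y : α} (hx : x ∈ A) (hy : y ∈ A) :
    A.lexKeyReverseCompl x ≤ A.lexKeyReverseCompl y ↔ x ≤ y := by
  rw [lexKeyReverseCompl_of_mem hx, lexKeyReverseCompl_of_mem hy, Sum.Lex.inl_le_inl_iff]

theorem lexKeyReverseCompl_le_iff_of_notMem {x y : α} (hx : x ∉ A) (hy : y ∉ A) :
    A.lexKeyReverseCompl x ≤ A.lexKeyReverseCompl y ↔ y ≤ x := by
  rw [lexKeyReverseCompl_of_notMem hx, lexKeyReverseCompl_of_notMem hy,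
    Sum.Lex.inr_le_inr_iff, OrderDual.toDual_le_toDual]

variable [WellFoundedLT α] {S F : Set α}

theorem exists_lexKeyReverseCompl_least (hSA : S ⊆ A) (hS : S.Nonempty) :
    ∃ a ∈ S, ∀ x ∈ S, A.lexKeyReverseCompl a ≤ A.lexKeyReverseCompl x := by
  obtain ⟨a, haS, hmin⟩ := wellFounded_lt.has_min S hS
  exact ⟨a, haS, fun x hx =>
    (lexKeyReverseCompl_le_iff_of_mem (hSA haS) (hSA hx)).mpr (not_lt.mp (hmin x hx))⟩

theorem exists_lexKeyReverseCompl_greatest (hSA : S ⊆ Aᶜ) (hS : S.Nonempty) :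
    ∃ b ∈ S, ∀ x ∈ S, A.lexKeyReverseCompl x ≤ A.lexKeyReverseCompl b := by
  obtain ⟨b, hbS, hmin⟩ := wellFounded_lt.has_min S hS
  exact ⟨b, hbS, fun x hx =>
    (lexKeyReverseCompl_le_iff_of_notMem (hSA hx) (hSA hbS)).mpr (not_lt.mp (hmin x hx))⟩

theorem exists_lexKeyReverseCompl_least_of_inter_nonempty (hFA : (F ∩ A).Nonempty) :
    ∃ a ∈ F, ∀ x ∈ F, A.lexKeyReverseCompl a ≤ A.lexKeyReverseCompl x := by
  obtain ⟨a, ⟨haF, haA⟩, hmin⟩ := exists_lexKeyReverseCompl_least inter_subset_right hFA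
  refine ⟨a, haF, fun x hx => ?_⟩
  by_cases hxA : x ∈ A
  · exact hmin x ⟨hx, hxA⟩
  · exact lexKeyReverseCompl_le_of_mem_of_notMem haA hxA

theorem exists_lexKeyReverseCompl_greatest_of_diff_nonempty (hFA : (F \ A).Nonempty) :
    ∃ b ∈ F, ∀ x ∈ F, A.lexKeyReverseCompl x ≤ A.lexKeyReverseCompl b := by
  obtain ⟨b, ⟨hbF, hbA⟩, hmax⟩ := exists_lexKeyReverseCompl_greatest (sdiff_subset_compl _ _) hFA
  refine ⟨b, hbF, fun x hx => ?_⟩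
  by_cases hxA : x ∈ A
  · exact lexKeyReverseCompl_le_of_mem_of_notMem hxA hbA
  · exact hmax x ⟨hx, hxA⟩

end Set

open Set Function in
theorem stackelCompact_of_disjoint_limit_sets_general {X : Type*} [TopologicalSpace X]
    (A B : Set X) (hdisj : Disjoint A B)
    (hlim : ∀ S : Set X, S.Infinite →
      (∃ a ∈ A, AccPt a (𝓟 S)) ∧ (∃ b ∈ B, AccPt b (𝓟 S))) :
    ∃ r : X → X → Prop, IsLinearOrder X r ∧
      (∀ a ∈ A, ∀ x ∈ Aᶜ, r a x) ∧
      (∀ S : Set X, S ⊆ A → S.Nonempty → ∃ a ∈ S, ∀ x ∈ S, r a x) ∧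
      (∀ S : Set X, S ⊆ Aᶜ → S.Nonempty → ∃ b ∈ S, ∀ x ∈ S, r x b) ∧
      (∀ F : Set X, IsClosed F → F.Nonempty →
        (∃ a ∈ F, ∀ x ∈ F, r a x) ∧ (∃ b ∈ F, ∀ x ∈ F, r x b)) := by
  obtain ⟨_, _⟩ := exists_wellFoundedLT X
  refine ⟨(· ≤ ·) on A.lexKeyReverseCompl,
    lexKeyReverseCompl_injective.isLinearOrder_onFun _,
    fun a ha x hx => lexKeyReverseCompl_le_of_mem_of_notMem ha hx,
    fun S => exists_lexKeyReverseCompl_least, fun S => exists_lexKeyReverseCompl_greatest,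
    fun F hF hF₀ => ⟨?_, ?_⟩⟩
  · rcases (F ∩ A).eq_empty_or_nonempty with hFA | hFA
    · have hfin := hF.finite_of_disjoint (fun S hS => (hlim S hS).1)
        (disjoint_iff_inter_eq_empty.mpr hFA)
      exact exists_min_image F _ hfin hF₀
    · exact exists_lexKeyReverseCompl_least_of_inter_nonempty hFA
  · rcases (F \ A).eq_empty_or_nonempty with hFA | hFA
    · have hfin := hF.finite_of_disjoint (fun S hS => (hlim S hS).2)
        (hdisj.mono_left (sdiff_eq_empty.mp hFA))
      exact exists_max_image F _ hfin hF₀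
    · exact exists_lexKeyReverseCompl_greatest_of_diff_nonempty hFA

/-- Let X be Hausdorff with disjoint subsets A and B such that every infinite subset of X
has a limit point in A and a limit point in B.  Then X is Stäckel-compact: there is a
linear order in which A comes first and is well-ordered, X \ A comes after and is
reverse well-ordered, and every non-empty closed set has a least and greatest element. -/
theorem stackelCompact_of_disjoint_limit_sets {X : Type*} [TopologicalSpace X]
    [T2Space X] (A B : Set X) (hdisj : Disjoint A B)
    (hlim : ∀ S : Set X, S.Infinite →
      (∃ a ∈ A, AccPt a (𝓟 S)) ∧ (∃ b ∈ B, AccPt b (𝓟 S))) :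
    ∃ r : X → X → Prop, IsLinearOrder X r ∧
      (∀ a ∈ A, ∀ x ∈ Aᶜ, r a x) ∧
      (∀ S : Set X, S ⊆ A → S.Nonempty → ∃ a ∈ S, ∀ x ∈ S, r a x) ∧
      (∀ S : Set X, S ⊆ Aᶜ → S.Nonempty → ∃ b ∈ S, ∀ x ∈ S, r x b) ∧
      (∀ F : Set X, IsClosed F → F.Nonempty →
        (∃ a ∈ F, ∀ x ∈ F, r a x) ∧ (∃ b ∈ F, ∀ x ∈ F, r x b)) :=
  stackelCompact_of_disjoint_limit_sets_general A B hdisj hlim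
end
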